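/- arXiv:1702.06897 — 12 statements merged into one kernel-verified Lean document; each statement's English description precedes it below -/
import Mathlib

section
/- Let a_1, …, a_{n+1} be distinct integers and define the (n+1) × n matrix W by row i equal to (a_i − a_1, …, a_i − a_{i−1}, a_i − a_{i+1}, …, a_i − a_{n+1}). Then for all complex x, y, and for all z in the domain, Σ_{i=1}^{n+1} Π_{j≠i} (x z^{a_i − a_j} + y)/(z^{a_i − a_j} − 1) = (x^{n+1} − (−y)^{n+1})/(x + y). In particular this sum does not depend on z. -/
/-!
With `t i = z ^ a i` each factor becomes `(x t_i + y t_j) / (t_i - t_j)`, so it suffices to prove,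
for distinct nonzero `t_i`, that `(x + y) * Σ_i Π_{j ≠ i} (x t_i + y t_j) / (t_i - t_j)` equals
`x ^ N - (-y) ^ N`. The polynomial `f = Π_j (x X + y t_j) - x ^ N Π_j (X - t_j)` has degree `< N`
and `f(t_i) = (x + y) t_i Π_{j ≠ i} (x t_i + y t_j)`; evaluating its Lagrange interpolant at the
nodes `t_i` at the point `0` (barycentric form) gives the identity.
-/

open Finset Polynomial Lagrange

theorem Polynomial.degree_sub_lt_of_coeff_eq {R : Type*} [Ring R] {p q : R[X]} {m : ℕ}
    (hp : p.natDegree ≤ m) (hq : q.natDegree ≤ m) (h : p.coeff m = q.coeff m) :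
    (p - q).degree < m := by
  rw [degree_lt_iff_coeff_zero]
  intro k hk
  rcases hk.eq_or_lt with rfl | hk
  · rw [coeff_sub, h, sub_self]
  · rw [coeff_sub, coeff_eq_zero_of_natDegree_lt (hp.trans_lt hk),
      coeff_eq_zero_of_natDegree_lt (hq.trans_lt hk), sub_zero]

section

variable {K ι : Type*} [Field K]

theorem degree_prod_linear_sub_C_mul_nodal_lt (s : Finset ι) (x : K) (c v : ι → K) :
    (∏ j ∈ s, (C x * X + C (c j)) - C (x ^ #s) * nodal s v).degree < #s := by
  have hlin : ∀ j ∈ s, (C x * X + C (c j)).natDegree ≤ 1 := fun j _ => by compute_degree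
  refine degree_sub_lt_of_coeff_eq ?_ ?_ ?_
  · simpa using (natDegree_prod_le s _).trans (sum_le_sum hlin)
  · exact natDegree_C_mul_le _ _ |>.trans natDegree_nodal.le
  · have hnodal : (nodal s v).coeff #s = 1 := by
      simpa [natDegree_nodal] using (nodal_monic (s := s) (v := v)).coeff_natDegree
    rw [← mul_one #s, coeff_prod_of_natDegree_le s _ 1 hlin, coeff_C_mul, mul_one, hnodal]
    simp

theorem mul_sum_prod_div_sub [DecidableEq ι] {s : Finset ι} {t : ι → K} (ht : Set.InjOn t s)
    (ht0 : ∀ i ∈ s, t i ≠ 0) (x y : K) :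
    (x + y) * ∑ i ∈ s, ∏ j ∈ s.erase i, (x * t i + y * t j) / (t i - t j)
      = x ^ #s - (-y) ^ #s := by
  set f := ∏ j ∈ s, (C x * X + C (y * t j)) - C (x ^ #s) * nodal s t
  have hf := congrArg (eval 0) <|
    eq_interpolate ht (degree_prod_linear_sub_C_mul_nodal_lt s x (fun j => y * t j) t)
  have hQ : eval 0 (nodal s t) ≠ 0 := by
    rw [eval_nodal, prod_ne_zero_iff]
    exact fun j hj => sub_ne_zero.mpr (ht0 j hj).symm
  -- `Π_j (y t_j) = (-y) ^ #s Π_j (0 - t_j)`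
  have hf0 : eval 0 f = eval 0 (nodal s t) * ((-y) ^ #s - x ^ #s) := by
    simp only [f, eval_sub, eval_mul, eval_prod, eval_add, eval_C, eval_X, eval_nodal, mul_zero,
      zero_add, mul_sub, ← prod_const, ← prod_mul_distrib]
    ring_nf
  -- The nodal part of `f` vanishes at `t i`, and the `j = i` factor `(x + y) t_i` of `f (t i)`
  -- cancels the barycentric weight `(0 - t i)⁻¹`.
  have hnode : ∀ i ∈ s, nodalWeight s t i * (0 - t i)⁻¹ * eval (t i) f
      = -((x + y) * ∏ j ∈ s.erase i, (x * t i + y * t j) / (t i - t j)) := by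
    intro i hi
    simp only [f, eval_sub, eval_mul, eval_prod, eval_add, eval_C, eval_X, eval_nodal_at_node hi,
      mul_zero, sub_zero, nodalWeight, ← mul_prod_erase s _ hi, prod_div_distrib, prod_inv_distrib]
    field_simp [ht0 i hi]
    ring
  rw [eval_interpolate_not_at_node _ fun i hi => (ht0 i hi).symm, hf0, sum_congr rfl hnode,
    sum_neg_distrib, ← mul_sum] at hf
  linear_combination mul_left_cancel₀ hQ hf

theorem mul_div_add_div_div_sub_one (x y u : K) {w : K} (hw : w ≠ 0) :
    (x * (u / w) + y) / (u / w - 1) = (x * u + y * w) / (u - w) := by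
  rw [← div_div_div_cancel_right₀ hw (x * u + y * w)]
  congr 1 <;> field_simp

end

theorem stmt_4_general (n : ℕ) (a : Fin (n + 1) → ℤ)
    (x y z : ℂ) (hz : z ≠ 0) (hzd : ∀ i j : Fin (n + 1), i ≠ j → z ^ (a i - a j) ≠ 1) :
    ∑ i, ∏ j ∈ Finset.univ.erase i, (x * z ^ (a i - a j) + y) / (z ^ (a i - a j) - 1)
      = if x + y = 0 then (n + 1) * x ^ n
        else (x ^ (n + 1) - (-y) ^ (n + 1)) / (x + y) := by
  set t : Fin (n + 1) → ℂ := fun i => z ^ a i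
  have ht0 : ∀ i, t i ≠ 0 := fun i => zpow_ne_zero _ hz
  have hzpow : ∀ i j, z ^ (a i - a j) = t i / t j := fun i j => zpow_sub₀ hz _ _
  have ht : Function.Injective t := fun i j hij => by
    by_contra hne
    exact hzd i j hne (by rw [hzpow, hij, div_self (ht0 j)])
  simp only [hzpow, mul_div_add_div_div_sub_one _ _ _ (ht0 _)]
  split_ifs with hxy
  · have hfactor : ∀ i, ∀ j ∈ univ.erase i, (x * t i + y * t j) / (t i - t j) = x := by
      intro i j hj
      rw [eq_neg_of_add_eq_zero_right hxy, neg_mul, ← sub_eq_add_neg, ← mul_sub,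
        mul_div_cancel_right₀ _ (sub_ne_zero.mpr (ht.ne (ne_of_mem_erase hj).symm))]
    rw [sum_congr rfl fun i _ => prod_congr rfl (hfactor i)]
    simp
  · rw [eq_div_iff hxy, mul_comm]
    simpa using mul_sum_prod_div_sub (s := univ) ht.injOn (fun i _ => ht0 i) x y

/-- Quasilinear sets of powers are rigid: the sum equals (x^{n+1} - (-y)^{n+1})/(x+y)
(interpreted as (n+1)x^n when x + y = 0), independently of z. -/
theorem stmt_4 (n : ℕ) (a : Fin (n + 1) → ℤ) (ha : Function.Injective a)
    (x y z : ℂ) (hz : z ≠ 0) (hzd : ∀ i j : Fin (n + 1), i ≠ j → z ^ (a i - a j) ≠ 1) :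
    ∑ i, ∏ j ∈ Finset.univ.erase i, (x * z ^ (a i - a j) + y) / (z ^ (a i - a j) - 1)
      = if x + y = 0 then (n + 1) * x ^ n
        else (x ^ (n + 1) - (-y) ^ (n + 1)) / (x + y) :=
  stmt_4_general n a x y z hz hzd
end

section
/- Let m = 2k and let b_1, …, b_m be positive integers with signs ε_i ∈ {1,-1}. If Σ_{i=1}^m ε_i (z^{b_i} + 1)/(z^{b_i} − 1) = 0 for all complex z in the domain, then the multiset of pairs {(b_i, ε_i)} can be partitioned into k pairs of the form {(a, 1), (a, −1)}; that is, there is a fixed-point-free involution σ on {1,…,m} with b_{σ(i)} = b_i and ε_{σ(i)} = −ε_i for all i. -/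
/-!
Restricting to real `z = x ∈ (0, 1)` and grouping equal exponents, the hypothesis reads
`∑ₐ cₐ (xᵃ + 1) / (xᵃ - 1) = 0`, where `cₐ` is the signed count of the indices with `bᵢ = a`.
Letting `x → 0` gives `∑ₐ cₐ = 0`, hence `∑ₐ cₐ xᵃ / (xᵃ - 1) = 0`; dividing by `xᵃ` for the least
exponent `a` and letting `x → 0` again gives `cₐ = 0`, and induction kills every `cₐ`. So each
exponent carries as many signs `+1` as `-1`, and matching them fiber by fiber gives the involution.
-/

open Filter Topology Set Finset

theorem eq_zero_of_tendsto_of_eqOn_Ioo {f : ℝ → ℝ} {a b L : ℝ} (hab : a < b)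
    (hf : Tendsto f (𝓝[>] a) (𝓝 L)) (h : ∀ x ∈ Ioo a b, f x = 0) : L = 0 :=
  tendsto_nhds_unique hf <| tendsto_const_nhds.congr' <|
    eventually_of_mem (Ioo_mem_nhdsGT hab) fun x hx => (h x hx).symm

theorem tendsto_pow_div_pow_sub_one (m n : ℕ) (hn : 0 < n) :
    Tendsto (fun x : ℝ => x ^ m / (x ^ n - 1)) (𝓝 0) (𝓝 (0 ^ m / (0 ^ n - 1))) := by
  apply ContinuousAt.tendsto
  fun_prop (disch := simp [hn.ne'])

theorem coeff_eq_zero_of_sum_pow_div_pow_sub_one_eq_zero (c : ℕ → ℝ) {S : Finset ℕ}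
    (hS : ∀ a ∈ S, 0 < a) (h : ∀ x ∈ Ioo (0 : ℝ) 1, ∑ a ∈ S, c a * (x ^ a / (x ^ a - 1)) = 0) :
    ∀ a ∈ S, c a = 0 := by
  induction S using Finset.induction_on_min with
  | empty => simp
  | insert a s has ih =>
    have ha : 0 < a := hS a (mem_insert_self a s)
    have hle : ∀ y ∈ insert a s, a ≤ y := by
      simpa [forall_mem_insert] using fun y hy => (has y hy).le
    -- dividing by `x ^ a` leaves a function whose value at `0` is `-c a`
    have hca : c a = 0 := by
      have hlim := tendsto_finsetSum (insert a s) fun y hy =>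
        (tendsto_pow_div_pow_sub_one (y - a) y (hS y hy)).const_mul (c y)
      have hzero : ∀ x ∈ Ioo (0 : ℝ) 1,
          ∑ y ∈ insert a s, c y * (x ^ (y - a) / (x ^ y - 1)) = 0 := by
        intro x hx
        have hxa : x ^ a ≠ 0 := pow_ne_zero _ hx.1.ne'
        rw [← mul_left_inj' hxa, zero_mul, ← h x hx, sum_mul]
        refine sum_congr rfl fun y hy => ?_
        rw [← pow_sub_mul_pow x (hle y hy)]
        ring
      have := eq_zero_of_tendsto_of_eqOn_Ioo zero_lt_one (hlim.mono_left nhdsWithin_le_nhds) hzero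
      rw [sum_insert (fun h => (has a h).false), sum_eq_zero fun y hy => by
        simp [Nat.sub_ne_zero_of_lt (has y hy)]] at this
      simpa [ha.ne'] using this
    intro y hy
    rcases mem_insert.mp hy with rfl | hy
    · exact hca
    refine ih (fun y hy => hS y (mem_insert_of_mem hy)) (fun x hx => ?_) y hy
    simpa [sum_insert (fun h => (has a h).false), hca] using h x hx

theorem coeff_eq_zero_of_sum_pow_add_one_div_pow_sub_one_eq_zero (c : ℕ → ℝ) {S : Finset ℕ}
    (hS : ∀ a ∈ S, 0 < a)
    (h : ∀ x ∈ Ioo (0 : ℝ) 1, ∑ a ∈ S, c a * ((x ^ a + 1) / (x ^ a - 1)) = 0) :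
    ∀ a ∈ S, c a = 0 := by
  have hsum : ∑ a ∈ S, c a = 0 := by
    have hlim := tendsto_finsetSum S fun a ha =>
      ((show ContinuousAt (fun x : ℝ => (x ^ a + 1) / (x ^ a - 1)) 0 by
        fun_prop (disch := simp [(hS a ha).ne'])).tendsto.const_mul (c a))
    have := eq_zero_of_tendsto_of_eqOn_Ioo zero_lt_one (hlim.mono_left nhdsWithin_le_nhds) h
    rw [sum_congr rfl fun a ha => show c a * ((0 ^ a + 1) / (0 ^ a - 1)) = -c a by
      simp [(hS a ha).ne']] at this
    simpa using this
  refine coeff_eq_zero_of_sum_pow_div_pow_sub_one_eq_zero c hS fun x hx => ?_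
  have hx1 : ∀ a ∈ S, x ^ a - 1 ≠ 0 := fun a ha =>
    sub_ne_zero.mpr (pow_lt_one₀ hx.1.le hx.2 (hS a ha).ne').ne
  have := h x hx
  rw [sum_congr rfl fun a ha => show c a * ((x ^ a + 1) / (x ^ a - 1)) =
    2 * (c a * (x ^ a / (x ^ a - 1))) - c a by field_simp [hx1 a ha]; ring,
    sum_sub_distrib, ← mul_sum, hsum] at this
  linarith

theorem sum_fiber_eq_zero_of_sum_pow_add_one_div_pow_sub_one_eq_zero {ι : Type*} [Fintype ι]
    (b : ι → ℕ) (w : ι → ℝ) (hb : ∀ i, 0 < b i)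
    (h : ∀ x ∈ Ioo (0 : ℝ) 1, ∑ i, w i * ((x ^ b i + 1) / (x ^ b i - 1)) = 0) (a : ℕ) :
    ∑ i with b i = a, w i = 0 := by
  by_cases ha : a ∈ Finset.image b univ
  · refine coeff_eq_zero_of_sum_pow_add_one_div_pow_sub_one_eq_zero
      (fun a => ∑ i with b i = a, w i) (by simp [hb]) (fun x hx => ?_) a ha
    rw [← h x hx, ← sum_fiberwise_of_maps_to (g := b) (t := Finset.image b univ) (by simp)]
    refine sum_congr rfl fun a _ => ?_
    rw [sum_mul]
    exact sum_congr rfl fun i hi => by rw [(mem_filter.mp hi).2]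
  · exact sum_eq_zero fun i hi =>
      absurd (mem_image_of_mem b (mem_univ i)) ((mem_filter.mp hi).2 ▸ ha)

theorem sum_filter_sign_eq_card_sub_card {ι : Type*} [Fintype ι] (ε : ι → ℤ)
    (hε : ∀ i, ε i = 1 ∨ ε i = -1) (q : ι → Prop) [DecidablePred q] :
    ∑ i with q i, ε i = Nat.card {i // ε i = 1 ∧ q i} - Nat.card {i // ¬ε i = 1 ∧ q i} := by
  classical
  have hsign : ∀ i, ε i = if ε i = 1 then 1 else -1 := fun i => by
    rcases hε i with h | h <;> simp [h]
  rw [sum_congr rfl fun i _ => hsign i, sum_ite]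
  simp [Nat.card_eq_fintype_card, Fintype.card_subtype, filter_filter, and_comm, sub_eq_add_neg]

theorem exists_involutive_perm_of_card_fiber_eq {ι β : Type*} [Finite ι] (p : ι → Prop)
    (b : ι → β) (h : ∀ a, Nat.card {i // p i ∧ b i = a} = Nat.card {i // ¬p i ∧ b i = a}) :
    ∃ σ : Equiv.Perm ι, (∀ i, σ (σ i) = i) ∧ (∀ i, b (σ i) = b i) ∧ ∀ i, p (σ i) ↔ ¬p i := by
  classical
  obtain ⟨e, he⟩ : ∃ e : {i // p i} ≃ {i // ¬p i}, ∀ i, b (e i) = b i :=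
    ⟨Equiv.ofFiberEquiv fun a => (Equiv.subtypeSubtypeEquivSubtypeInter p (b · = a)).trans <|
      (Finite.card_eq.mp (h a)).some.trans (Equiv.subtypeSubtypeEquivSubtypeInter _ _).symm,
      Equiv.ofFiberEquiv_map (g := fun j : {i // ¬p i} => b j) _⟩
  have he' : ∀ j, b (e.symm j) = b j := fun j => by simpa using (he (e.symm j)).symm
  refine ⟨(Equiv.sumCompl p).permCongr ((Equiv.sumCongr e e.symm).trans (Equiv.sumComm _ _)),
    fun i => ?_, fun i => ?_, fun i => ?_⟩ <;> by_cases hi : p i <;>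
    simp [Equiv.permCongr_apply, Equiv.sumCompl_symm_apply_of_pos,
      Equiv.sumCompl_symm_apply_of_neg, hi, he, he', (e _).2, (e.symm _).2]

theorem stmt_5_general (m : ℕ) (b : Fin m → ℕ) (ε : Fin m → ℤ)
    (hb : ∀ i, 0 < b i) (hε : ∀ i, ε i = 1 ∨ ε i = -1)
    (hzero : ∀ z : ℂ, z ≠ 0 → (∀ i, z ^ (b i) ≠ 1) →
      ∑ i, (ε i : ℂ) * ((z ^ (b i) + 1) / (z ^ (b i) - 1)) = 0) :
    ∃ σ : Equiv.Perm (Fin m), (∀ i, σ i ≠ i) ∧ (∀ i, σ (σ i) = i) ∧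
      (∀ i, b (σ i) = b i) ∧ (∀ i, ε (σ i) = -ε i) := by
  have hreal : ∀ x ∈ Ioo (0 : ℝ) 1, ∑ i, (ε i : ℝ) * ((x ^ b i + 1) / (x ^ b i - 1)) = 0 := by
    intro x hx
    have hpow : ∀ i, x ^ b i ≠ 1 := fun i => (pow_lt_one₀ hx.1.le hx.2 (hb i).ne').ne
    exact_mod_cast hzero x (by exact_mod_cast hx.1.ne') fun i => by exact_mod_cast hpow i
  have hcard (a : ℕ) :
      Nat.card {i // ε i = 1 ∧ b i = a} = Nat.card {i // ¬ε i = 1 ∧ b i = a} := by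
    have hfiber : ∑ i with b i = a, ε i = 0 := by
      exact_mod_cast sum_fiber_eq_zero_of_sum_pow_add_one_div_pow_sub_one_eq_zero b _ hb hreal a
    rw [sum_filter_sign_eq_card_sub_card ε hε] at hfiber
    omega
  obtain ⟨σ, hσσ, hσb, hσε⟩ := exists_involutive_perm_of_card_fiber_eq (ε · = 1) b hcard
  have hflip (i : Fin m) : ε (σ i) = -ε i := by
    have := hσε i
    rcases hε i with h | h <;> rcases hε (σ i) with h' | h' <;> simp_all
  refine ⟨σ, fun i hi => ?_, hσσ, hσb, hflip⟩
  have := hflip i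
  rw [hi] at this
  rcases hε i with h | h <;> omega

/-- Classification for n = 1: if Σ ε_i (z^{b_i}+1)/(z^{b_i}-1) ≡ 0 then the weights
pair off via a fixed-point-free involution reversing signs. -/
theorem stmt_5 (k : ℕ) (m : ℕ) (hm : m = 2 * k) (b : Fin m → ℕ) (ε : Fin m → ℤ)
    (hb : ∀ i, 0 < b i) (hε : ∀ i, ε i = 1 ∨ ε i = -1)
    (hzero : ∀ z : ℂ, z ≠ 0 → (∀ i, z ^ (b i) ≠ 1) →
      ∑ i, (ε i : ℂ) * ((z ^ (b i) + 1) / (z ^ (b i) - 1)) = 0) :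
    ∃ σ : Equiv.Perm (Fin m), (∀ i, σ i ≠ i) ∧ (∀ i, σ (σ i) = i) ∧
      (∀ i, b (σ i) = b i) ∧ (∀ i, ε (σ i) = -ε i) :=
  stmt_5_general m b ε hb hε hzero
end

section
/- Let b_1, …, b_m be positive integers with signs ε_i ∈ {1,-1}, and suppose Σ_{i=1}^m ε_i (z^{b_i} + 1)/(z^{b_i} − 1) is constant in z. Then m is even and the constant is 0. -/
/-!
Write `L` for the sum. Since `(w⁻¹ + 1) / (w⁻¹ - 1) = -(w + 1) / (w - 1)`, we have
`L (z⁻¹) = -L z`, so the constant `c` satisfies `c = -c`. Every `b i` is positive, so `L` is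
continuous at `0` with `L 0 = -∑ εᵢ`, and `L = c` on a punctured neighbourhood of `0`;
hence `∑ εᵢ = 0`. A sum of `m` terms `±1` has the parity of `m`.
-/

open Filter Topology

theorem Finset.even_sum_iff_even_card_of_odd {ι : Type*} {s : Finset ι} {f : ι → ℤ}
    (hf : ∀ i ∈ s, Odd (f i)) : Even (∑ i ∈ s, f i) ↔ Even s.card := by
  have hshift : Even (∑ i ∈ s, (f i - 1)) :=
    Finset.even_sum _ fun i hi => (hf i hi).sub_odd odd_one
  rw [Finset.sum_sub_distrib, Finset.sum_const, nsmul_one] at hshift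
  rw [← Int.even_coe_nat]
  exact ⟨fun h => by simpa using h.sub hshift, fun h => by simpa using hshift.add h⟩

theorem inv_add_one_div_inv_sub_one {K : Type*} [Field K] {w : K} (hw : w ≠ 0) :
    (w⁻¹ + 1) / (w⁻¹ - 1) = -((w + 1) / (w - 1)) := by
  calc (w⁻¹ + 1) / (w⁻¹ - 1) = (w * (w⁻¹ + 1)) / (w * (w⁻¹ - 1)) :=
        (mul_div_mul_left _ _ hw).symm
    _ = (1 + w) / -(w - 1) := by rw [mul_add, mul_sub, mul_inv_cancel₀ hw, mul_one, neg_sub]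
    _ = -((w + 1) / (w - 1)) := by rw [div_neg, add_comm]

theorem pow_ne_one_of_norm_ne_one {K : Type*} [NormedDivisionRing K] {z : K} (hz : ‖z‖ ≠ 1)
    {n : ℕ} (hn : n ≠ 0) : z ^ n ≠ 1 := by
  intro h
  apply hz
  have := congrArg norm h
  rwa [norm_pow, norm_one, pow_eq_one_iff_of_nonneg (norm_nonneg _) hn] at this

variable {ι K : Type*} [Fintype ι]

/-- The function `L` of the statement; the name comes from `(w + 1) / (w - 1) = coth (log w / 2)`. -/
noncomputable def signedCothSum [Field K] (b : ι → ℕ) (ε : ι → ℤ) (z : K) : K :=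
  ∑ i, (ε i : K) * ((z ^ b i + 1) / (z ^ b i - 1))

namespace signedCothSum

variable (b : ι → ℕ) (ε : ι → ℤ)

theorem inv [Field K] {z : K} (hz : z ≠ 0) : signedCothSum b ε z⁻¹ = -signedCothSum b ε z := by
  simp only [signedCothSum, ← Finset.sum_neg_distrib, inv_pow,
    inv_add_one_div_inv_sub_one (pow_ne_zero _ hz), mul_neg]

variable {b}

theorem apply_zero [Field K] (hb : ∀ i, b i ≠ 0) :
    signedCothSum b ε (0 : K) = -∑ i, (ε i : K) := by
  simp [signedCothSum, zero_pow (hb _)]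

theorem continuousAt_zero [NormedField K] (hb : ∀ i, b i ≠ 0) :
    ContinuousAt (signedCothSum b ε) (0 : K) := by
  unfold signedCothSum
  fun_prop (disch := simp [zero_pow (hb _)])

theorem apply_zero_eq_of_forall [NontriviallyNormedField K] (hb : ∀ i, b i ≠ 0) {c : K}
    (hc : ∀ z : K, z ≠ 0 → (∀ i, z ^ b i ≠ 1) → signedCothSum b ε z = c) :
    signedCothSum b ε 0 = c := by
  have hnear : signedCothSum b ε =ᶠ[𝓝[≠] 0] fun _ => c := by
    filter_upwards [self_mem_nhdsWithin,
      nhdsWithin_le_nhds (Metric.ball_mem_nhds (0 : K) one_pos)] with z hz0 hz1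
    rw [mem_ball_zero_iff] at hz1
    exact hc z hz0 fun i => pow_ne_one_of_norm_ne_one hz1.ne (hb i)
  exact (tendsto_const_nhds_iff.mp
    (((continuousAt_zero ε hb).tendsto.mono_left nhdsWithin_le_nhds).congr' hnear)).symm

end signedCothSum

/-- If Σ ε_i (z^{b_i}+1)/(z^{b_i}-1) is constant (b_i > 0), then m is even
and the constant is 0. -/
theorem stmt_6 (m : ℕ) (b : Fin m → ℕ) (ε : Fin m → ℤ) (c : ℂ)
    (hb : ∀ i, 0 < b i) (hε : ∀ i, ε i = 1 ∨ ε i = -1)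
    (hconst : ∀ z : ℂ, z ≠ 0 → (∀ i, z ^ (b i) ≠ 1) →
      ∑ i, (ε i : ℂ) * ((z ^ (b i) + 1) / (z ^ (b i) - 1)) = c) :
    Even m ∧ c = 0 := by
  have hb₀ : ∀ i, b i ≠ 0 := fun i => (hb i).ne'
  have hL : ∀ z : ℂ, z ≠ 0 → (∀ i, z ^ b i ≠ 1) → signedCothSum b ε z = c := hconst
  have hc : c = 0 := by
    have hinv := signedCothSum.inv b ε (two_ne_zero (α := ℂ))
    rw [hL _ (by norm_num) fun i => pow_ne_one_of_norm_ne_one (by norm_num) (hb₀ i),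
      hL _ two_ne_zero fun i => pow_ne_one_of_norm_ne_one (by norm_num) (hb₀ i)] at hinv
    exact CharZero.eq_neg_self_iff.mp hinv
  have hsum : ∑ i, ε i = 0 := by
    have h0 := signedCothSum.apply_zero_eq_of_forall ε hb₀ hL
    rw [signedCothSum.apply_zero ε hb₀, hc, neg_eq_zero] at h0
    exact_mod_cast h0
  have hodd : ∀ i ∈ Finset.univ, Odd (ε i) := fun i _ => by rcases hε i with h | h <;> simp [h]
  simpa [hc] using (Finset.even_sum_iff_even_card_of_odd hodd).mp (hsum ▸ Even.zero)
end

section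
/- Let b_1, …, b_m be positive integers with signs ε_i ∈ {1,-1} and suppose Σ_{i=1}^m ε_i (z^{b_i} + 1)/(z^{b_i} − 1) = 0 identically, with b_m = max_i b_i. Then there exists an index l ≠ m with b_l = b_m and ε_l = −ε_m. -/
/-!
Let `B = b_m` and let `ζ` be a primitive `B`-th root of unity. Multiplying the sum by `z ^ B - 1`
clears its poles at `ζ`: a term with `b_i < B` is continuous at `ζ` (as `ζ ^ b_i ≠ 1`) and becomes
`0` there, while a term with `b_i = B` becomes `ε_i (z ^ B + 1) → 2 ε_i`. Letting `z → ζ` radially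
from outside the unit circle, where the sum vanishes, gives `∑_{b_i = B} ε_i = 0`; as the `ε_i`
are signs, `ε_m` must be cancelled by an `ε_l = -ε_m` with `b_l = B`.
-/

open Filter Topology

theorem pow_ne_one_of_one_lt_norm {𝕜 : Type*} [NormedDivisionRing 𝕜] {z : 𝕜} (hz : 1 < ‖z‖)
    {n : ℕ} (hn : n ≠ 0) : z ^ n ≠ 1 := by
  intro h
  have := congrArg norm h
  rw [norm_pow, norm_one] at this
  exact (one_lt_pow₀ hz hn).ne' this

theorem tendsto_pow_sub_one_mul_div {ζ : ℂ} {B k : ℕ} (hζ : IsPrimitiveRoot ζ B) (hk : 0 < k)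
    (hkB : k ≤ B) :
    Tendsto (fun z : ℂ => (z ^ B - 1) * ((z ^ k + 1) / (z ^ k - 1))) (𝓝[{z | z ^ B ≠ 1}] ζ)
      (𝓝 (if k = B then 2 else 0)) := by
  by_cases hkB' : k = B
  · subst hkB'
    rw [if_pos rfl]
    have hlim : Tendsto (fun z : ℂ => z ^ k + 1) (𝓝 ζ) (𝓝 2) := by
      have hcont : Continuous (fun z : ℂ => z ^ k + 1) := by fun_prop
      simpa [hζ.pow_eq_one, one_add_one_eq_two] using hcont.tendsto ζ
    refine (tendsto_nhdsWithin_of_tendsto_nhds hlim).congr' ?_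
    filter_upwards [self_mem_nhdsWithin] with z hz
    field_simp [sub_ne_zero.mpr hz]
  · rw [if_neg hkB']
    have hζk : ζ ^ k - 1 ≠ 0 :=
      sub_ne_zero.mpr (hζ.pow_ne_one_of_pos_of_lt hk.ne' (lt_of_le_of_ne hkB hkB'))
    refine tendsto_nhdsWithin_of_tendsto_nhds ?_
    have hcont : ContinuousAt (fun z : ℂ => (z ^ B - 1) * ((z ^ k + 1) / (z ^ k - 1))) ζ :=
      (continuous_sub_right 1 |>.comp (continuous_pow B)).continuousAt.mul
        (ContinuousAt.div (by fun_prop) (by fun_prop) hζk)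
    simpa [hζ.pow_eq_one] using hcont.tendsto

theorem tendsto_pow_sub_one_mul_sum {ι : Type*} [Fintype ι] {ζ : ℂ} {B : ℕ}
    (hζ : IsPrimitiveRoot ζ B) {b : ι → ℕ} (hb : ∀ i, 0 < b i) (hbB : ∀ i, b i ≤ B) (c : ι → ℂ) :
    Tendsto (fun z : ℂ => (z ^ B - 1) * ∑ i, c i * ((z ^ b i + 1) / (z ^ b i - 1)))
      (𝓝[{z | z ^ B ≠ 1}] ζ) (𝓝 (2 * ∑ i with b i = B, c i)) := by
  have hsum : 2 * ∑ i with b i = B, c i = ∑ i, c i * if b i = B then 2 else 0 := by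
    simp [Finset.sum_filter, Finset.mul_sum, mul_comm]
  simp_rw [hsum, Finset.mul_sum, mul_left_comm _ (c _)]
  exact tendsto_finsetSum _ fun i _ =>
    (tendsto_pow_sub_one_mul_div hζ (hb i) (hbB i)).const_mul (c i)

theorem sum_filter_eq_zero_of_sum_div_eq_zero {ι : Type*} [Fintype ι] {b : ι → ℕ} {B : ℕ}
    (hb : ∀ i, 0 < b i) (hbB : ∀ i, b i ≤ B) (hB : 0 < B) (c : ι → ℂ)
    (hzero : ∀ z : ℂ, 1 < ‖z‖ → ∑ i, c i * ((z ^ b i + 1) / (z ^ b i - 1)) = 0) :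
    ∑ i with b i = B, c i = 0 := by
  obtain ⟨ζ, hζ⟩ : ∃ ζ : ℂ, IsPrimitiveRoot ζ B := ⟨_, Complex.isPrimitiveRoot_exp B hB.ne'⟩
  have hnorm : ‖ζ‖ = 1 := Complex.norm_eq_one_of_pow_eq_one hζ.pow_eq_one hB.ne'
  have hray : ∀ r : ℝ, 1 < r → 1 < ‖(r : ℂ) * ζ‖ := fun r hr => by
    rwa [norm_mul, hnorm, mul_one, Complex.norm_real, Real.norm_of_nonneg (by linarith)]
  have hradial : Tendsto (fun r : ℝ => (r : ℂ) * ζ) (𝓝[>] 1) (𝓝[{z | z ^ B ≠ 1}] ζ) := by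
    refine tendsto_nhdsWithin_iff.mpr ⟨?_, ?_⟩
    · have hcont : Continuous (fun r : ℝ => (r : ℂ) * ζ) := by fun_prop
      simpa using (hcont.tendsto 1).mono_left nhdsWithin_le_nhds
    · filter_upwards [self_mem_nhdsWithin] with r hr
      exact pow_ne_one_of_one_lt_norm (hray r hr) hB.ne'
  have hlim := (tendsto_pow_sub_one_mul_sum hζ hb hbB c).comp hradial
  have h2C : 2 * ∑ i with b i = B, c i = 0 := tendsto_nhds_unique hlim <|
    tendsto_const_nhds.congr' <| by
      filter_upwards [self_mem_nhdsWithin] with r hr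
      rw [Function.comp_apply, hzero _ (hray r hr), mul_zero]
  simpa using h2C

theorem exists_ne_eq_neg_of_sum_eq_zero {ι : Type*} {s : Finset ι} {ε : ι → ℤ}
    (hε : ∀ i ∈ s, ε i = 1 ∨ ε i = -1) (hsum : ∑ i ∈ s, ε i = 0) {j : ι} (hj : j ∈ s) :
    ∃ l ∈ s, l ≠ j ∧ ε l = -ε j := by
  by_contra! hcon
  have hconst : ∀ l ∈ s, ε l = ε j := by
    intro l hl
    by_cases hlj : l = j
    · rw [hlj]
    · have := hcon l hl hlj
      rcases hε l hl with h1 | h1 <;> rcases hε j hj with h2 | h2 <;> omega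
  rw [Finset.sum_congr rfl hconst, Finset.sum_const, nsmul_eq_mul] at hsum
  have hcard : (s.card : ℤ) ≠ 0 := by exact_mod_cast (Finset.card_pos.mpr ⟨j, hj⟩).ne'
  have hεj : ε j ≠ 0 := by rcases hε j hj with h | h <;> simp [h]
  exact mul_ne_zero hcard hεj hsum

/-- If Σ ε_i (z^{b_i}+1)/(z^{b_i}-1) ≡ 0 and b_m is maximal, some other index
carries the same power with opposite sign. -/
theorem stmt_7 (m : ℕ) (b : Fin (m + 1) → ℕ) (ε : Fin (m + 1) → ℤ)
    (hb : ∀ i, 0 < b i) (hε : ∀ i, ε i = 1 ∨ ε i = -1)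
    (hmax : ∀ i, b i ≤ b (Fin.last m))
    (hzero : ∀ z : ℂ, z ≠ 0 → (∀ i, z ^ (b i) ≠ 1) →
      ∑ i, (ε i : ℂ) * ((z ^ (b i) + 1) / (z ^ (b i) - 1)) = 0) :
    ∃ l : Fin (m + 1), l ≠ Fin.last m ∧ b l = b (Fin.last m) ∧ ε l = -ε (Fin.last m) := by
  have hsumℂ : ∑ i with b i = b (Fin.last m), (ε i : ℂ) = 0 :=
    sum_filter_eq_zero_of_sum_div_eq_zero hb hmax (hb _) _ fun z hz =>
      hzero z (norm_pos_iff.mp (one_pos.trans hz)) fun i => pow_ne_one_of_one_lt_norm hz (hb i).ne'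
  have hsumℤ : ∑ i with b i = b (Fin.last m), ε i = 0 := by exact_mod_cast hsumℂ
  obtain ⟨l, hl, hlM, hεl⟩ := exists_ne_eq_neg_of_sum_eq_zero (fun i _ => hε i) hsumℤ
    (Finset.mem_filter.mpr ⟨Finset.mem_univ _, rfl⟩)
  exact ⟨l, hlM, (Finset.mem_filter.mp hl).2, hεl⟩
end

section
/- Let a_1, a_2, b_1, b_2, c_1, c_2 be positive integers satisfying, for all complex z in the common domain, the identity (z^{a_1}+1)(z^{a_2}+1)/((z^{a_1}−1)(z^{a_2}−1)) + (z^{b_1}+1)(z^{b_2}+1)/((z^{b_1}−1)(z^{b_2}−1)) = (z^{c_1}+1)(z^{c_2}+1)/((z^{c_1}−1)(z^{c_2}−1)) + 1. Then, after possibly swapping within the pairs, a_2 = b_2 = a_1 + b_1 and {c_1, c_2} = {a_1, b_1} (so the set of weights is quasilinear). -/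
/-!
Write `g(k, l) = (z^k + z^l) / ((z^k - 1)(z^l - 1))`. Each fraction in the hypothesis is
`1 + 2 g`, so the hypothesis says `g(a₁, a₂) + g(b₁, b₂) = g(c₁, c₂)`, and after clearing
denominators this is a polynomial identity, because it holds for every real `z > 1`.
Over `ℝ` we can compare degrees and signs of leading coefficients: as `z → ∞`,
`g(k, l) ~ z^(-k)` with a positive coefficient, so `c₁ = min(a₁, b₁)`, say `c₁ = a₁`.
Then `g(a₁, a₂) - g(a₁, c₂) = (z^c₂ - z^a₂)(z^a₁ + 1) / (…)` equals `-g(b₁, b₂)`, whose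
leading coefficient is negative, so `c₂ < a₂`, and the degrees give `c₂ = b₁`. Finally, subtracting
the identity `g(a, a + b) + g(b, a + b) = g(a, b)` gives
`g(a, a₂) - g(a, a + b) = g(b, a + b) - g(b, b₂)`. The same comparison of degrees and signs
shows that both sides vanish.
-/

open Polynomial

section
variable {R : Type*} [CommRing R] [LinearOrder R] [IsStrictOrderedRing R]

lemma leadingCoeff_add_pos {p q : R[X]} (hp : 0 < p.leadingCoeff)
    (hq : 0 < q.leadingCoeff) : 0 < (p + q).leadingCoeff := by
  rcases lt_trichotomy p.degree q.degree with h | h | h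
  · rwa [leadingCoeff_add_of_degree_lt h]
  · rw [leadingCoeff_add_of_degree_eq h (add_pos hp hq).ne']
    exact add_pos hp hq
  · rwa [leadingCoeff_add_of_degree_lt' h]

lemma degree_X_pow_sub_X_pow {m n : ℕ} (h : n < m) : (X ^ m - X ^ n : R[X]).degree = m := by
  rw [degree_sub_eq_left_of_degree_lt] <;> simp [h]

lemma monic_X_pow_sub_X_pow {m n : ℕ} (h : n < m) : (X ^ m - X ^ n : R[X]).Monic :=
  monic_X_pow_sub (by simpa using h)

lemma lt_and_degree_eq_of_X_pow_sub_X_pow_mul_eq {m n : ℕ} {p q : R[X]}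
    (hp : 0 < p.leadingCoeff) (hq : 0 < q.leadingCoeff) (h : (X ^ m - X ^ n) * p = q) :
    n < m ∧ m + p.degree = q.degree := by
  rcases lt_trichotomy n m with hnm | rfl | hmn
  · rw [← h, degree_mul, degree_X_pow_sub_X_pow hnm]
    exact ⟨hnm, rfl⟩
  · simp [← h] at hq
  · rw [← neg_sub, neg_mul] at h
    have := congrArg leadingCoeff h
    rw [leadingCoeff_neg, leadingCoeff_monic_mul (monic_X_pow_sub_X_pow hmn)] at this
    linarith

lemma lt_and_degree_eq_of_X_pow_sub_X_pow_mul_eq_X_pow_sub_X_pow_mul {m n k l : ℕ} {p q : R[X]}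
    (hp : 0 < p.leadingCoeff) (hq : 0 < q.leadingCoeff) (hnm : n < m)
    (h : (X ^ m - X ^ n) * p = (X ^ k - X ^ l) * q) : l < k ∧ k + q.degree = m + p.degree := by
  have hlc : 0 < ((X ^ m - X ^ n) * p).leadingCoeff := by
    rwa [leadingCoeff_monic_mul (monic_X_pow_sub_X_pow hnm)]
  rw [← degree_X_pow_sub_X_pow (R := R) hnm, ← degree_mul]
  exact lt_and_degree_eq_of_X_pow_sub_X_pow_mul_eq hq hlc h.symm

end

/-- `pairNum k l / pairDen k l` is `g(k, l)`, and `WeightIdentity a A b B c C` is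
`g(a, A) + g(b, B) = g(c, C)` with denominators cleared. -/
noncomputable def pairNum (k l : ℕ) : ℝ[X] := X ^ k + X ^ l

noncomputable def pairDen (k l : ℕ) : ℝ[X] := (X ^ k - 1) * (X ^ l - 1)

def WeightIdentity (a A b B c C : ℕ) : Prop :=
  pairDen c C * (pairNum a A * pairDen b B + pairNum b B * pairDen a A) =
    pairNum c C * (pairDen a A * pairDen b B)

lemma leadingCoeff_pairNum_pos (k l : ℕ) : 0 < (pairNum k l).leadingCoeff :=
  leadingCoeff_add_pos (by simp) (by simp)

lemma degree_pairNum {k l : ℕ} (h : k ≤ l) : (pairNum k l).degree = l := by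
  rw [pairNum, degree_add_eq_of_leadingCoeff_add_ne_zero (by simp)]
  simpa using Nat.mono_cast (α := WithBot ℕ) h

lemma monic_X_pow_sub_one {k : ℕ} (hk : 0 < k) : (X ^ k - 1 : ℝ[X]).Monic := by
  simpa using monic_X_pow_sub_C (1 : ℝ) hk.ne'

lemma degree_X_pow_sub_one {k : ℕ} (hk : 0 < k) : (X ^ k - 1 : ℝ[X]).degree = k := by
  simpa using degree_X_pow_sub_C hk (1 : ℝ)

lemma monic_pairDen {k l : ℕ} (hk : 0 < k) (hl : 0 < l) : (pairDen k l).Monic :=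
  (monic_X_pow_sub_one hk).mul (monic_X_pow_sub_one hl)

lemma degree_pairDen {k l : ℕ} (hk : 0 < k) (hl : 0 < l) : (pairDen k l).degree = ↑(k + l) := by
  rw [pairDen, degree_mul, degree_X_pow_sub_one hk, degree_X_pow_sub_one hl]
  norm_cast

lemma leadingCoeff_pairNum_mul_pos {q : ℝ[X]} (hq : q.Monic) (k l : ℕ) :
    0 < (pairNum k l * q).leadingCoeff := by
  rw [leadingCoeff_mul_monic hq]
  exact leadingCoeff_pairNum_pos k l

namespace WeightIdentity

variable {a A b B c C : ℕ}

lemma symm (h : WeightIdentity a A b B c C) : WeightIdentity b B a A c C := by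
  unfold WeightIdentity at *
  linear_combination h

lemma left_eq (ha : 0 < a) (hb : 0 < b) (hc : 0 < c) (haA : a ≤ A) (hbB : b ≤ B)
    (hcC : c ≤ C) (hab : a ≤ b) (h : WeightIdentity a A b B c C) : c = a := by
  have hA := ha.trans_le haA
  have hB := hb.trans_le hbB
  have hC := hc.trans_le hcC
  have hlc : (pairNum a A * pairDen b B).leadingCoeff
      + (pairNum b B * pairDen a A).leadingCoeff ≠ 0 := by
    rw [leadingCoeff_mul_monic (monic_pairDen hb hB), leadingCoeff_mul_monic (monic_pairDen ha hA)]
    exact (add_pos (leadingCoeff_pairNum_pos a A) (leadingCoeff_pairNum_pos b B)).ne'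
  have hdeg := congrArg degree h
  rw [degree_mul, degree_add_eq_of_leadingCoeff_add_ne_zero hlc, degree_mul, degree_mul, degree_mul,
    degree_mul, degree_pairNum haA, degree_pairNum hbB, degree_pairNum hcC, degree_pairDen ha hA,
    degree_pairDen hb hB, degree_pairDen hc hC] at hdeg
  rw [max_eq_left (by exact_mod_cast (by omega : B + (a + A) ≤ A + (b + B)))] at hdeg
  norm_cast at hdeg
  omega

lemma right_eq (ha : 0 < a) (hb : 0 < b) (haA : a ≤ A) (hbB : b ≤ B) (haC : a ≤ C)
    (h : WeightIdentity a A b B a C) : C = b := by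
  have hA := ha.trans_le haA
  have hB := hb.trans_le hbB
  have hC := ha.trans_le haC
  have h' : (X ^ A - X ^ C) * (pairNum 0 a * pairDen b B) =
      pairNum b B * (pairDen a A * (X ^ C - 1)) := by
    refine mul_left_cancel₀ (monic_X_pow_sub_one ha).ne_zero ?_
    unfold WeightIdentity pairNum pairDen at *
    linear_combination -h
  obtain ⟨-, hdeg⟩ := lt_and_degree_eq_of_X_pow_sub_X_pow_mul_eq
    (leadingCoeff_pairNum_mul_pos (monic_pairDen hb hB) 0 a)
    (leadingCoeff_pairNum_mul_pos ((monic_pairDen ha hA).mul (monic_X_pow_sub_one hC)) b B) h'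
  rw [degree_mul, degree_mul, degree_mul, degree_pairNum (Nat.zero_le a), degree_pairNum hbB,
    degree_pairDen hb hB, degree_pairDen ha hA, degree_X_pow_sub_one hC] at hdeg
  norm_cast at hdeg
  omega

lemma eq_add (ha : 0 < a) (hb : 0 < b) (haA : a ≤ A) (hbB : b ≤ B)
    (h : WeightIdentity a A b B a b) : A = a + b ∧ B = a + b := by
  have hA := ha.trans_le haA
  have hB := hb.trans_le hbB
  have hT : (X ^ (a + b) - X ^ A) * (pairNum 0 a * pairDen b B) =
      (X ^ B - X ^ (a + b)) * (pairNum 0 b * pairDen a A) := by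
    -- subtract the polynomial form of `g(a, a + b) + g(b, a + b) = g(a, b)`
    refine mul_left_cancel₀ (monic_pairDen ha hb).ne_zero ?_
    unfold WeightIdentity pairNum pairDen at *
    linear_combination (X ^ (a + b) - 1) * h
  have hp := leadingCoeff_pairNum_mul_pos (monic_pairDen hb hB) 0 a
  have hq := leadingCoeff_pairNum_mul_pos (monic_pairDen ha hA) 0 b
  have hdp : (pairNum 0 a * pairDen b B).degree = ↑(a + (b + B)) := by
    rw [degree_mul, degree_pairNum (Nat.zero_le a), degree_pairDen hb hB]
    norm_cast
  have hdq : (pairNum 0 b * pairDen a A).degree = ↑(b + (a + A)) := by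
    rw [degree_mul, degree_pairNum (Nat.zero_le b), degree_pairDen ha hA]
    norm_cast
  rcases lt_trichotomy A (a + b) with hlt | rfl | hgt
  · obtain ⟨-, hdeg⟩ := lt_and_degree_eq_of_X_pow_sub_X_pow_mul_eq_X_pow_sub_X_pow_mul hp hq hlt hT
    rw [hdp, hdq] at hdeg
    norm_cast at hdeg
    omega
  · rw [sub_self, zero_mul, eq_comm, mul_eq_zero, sub_eq_zero] at hT
    refine ⟨rfl, ?_⟩
    rcases hT with hT | hT
    · simpa using congrArg natDegree hT
    · exact absurd hT (leadingCoeff_ne_zero.mp hq.ne')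
  · have hT' : (X ^ A - X ^ (a + b)) * (pairNum 0 a * pairDen b B) =
        (X ^ (a + b) - X ^ B) * (pairNum 0 b * pairDen a A) := by
      linear_combination -hT
    obtain ⟨hlt, hdeg⟩ := lt_and_degree_eq_of_X_pow_sub_X_pow_mul_eq_X_pow_sub_X_pow_mul hp hq hgt hT'
    rw [hdp, hdq] at hdeg
    norm_cast at hdeg
    omega

lemma quasilinear (ha : 0 < a) (hb : 0 < b) (hc : 0 < c) (haA : a ≤ A) (hbB : b ≤ B)
    (hcC : c ≤ C) (hab : a ≤ b) (h : WeightIdentity a A b B c C) :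
    c = a ∧ C = b ∧ A = a + b ∧ B = a + b := by
  obtain rfl := h.left_eq ha hb hc haA hbB hcC hab
  obtain rfl := h.right_eq ha hb haA hbB hcC
  exact ⟨rfl, rfl, h.eq_add ha hb haA hbB⟩

lemma of_forall (ha : 0 < a) (hb : 0 < b) (hc : 0 < c) (haA : a ≤ A) (hbB : b ≤ B)
    (hcC : c ≤ C)
    (heq : ∀ z : ℂ, z ≠ 0 → z ^ a ≠ 1 → z ^ A ≠ 1 → z ^ b ≠ 1 → z ^ B ≠ 1 →
      z ^ c ≠ 1 → z ^ C ≠ 1 →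
      (z ^ a + 1) * (z ^ A + 1) / ((z ^ a - 1) * (z ^ A - 1))
        + (z ^ b + 1) * (z ^ B + 1) / ((z ^ b - 1) * (z ^ B - 1))
      = (z ^ c + 1) * (z ^ C + 1) / ((z ^ c - 1) * (z ^ C - 1)) + 1) :
    WeightIdentity a A b B c C := by
  refine eq_of_infinite_eval_eq _ _ ((Set.Ioi_infinite (1 : ℝ)).mono fun x (hx : 1 < x) => ?_)
  have hpow : ∀ {k : ℕ}, 0 < k → x ^ k - 1 ≠ 0 := fun hk =>
    sub_ne_zero.mpr (one_lt_pow₀ hx hk.ne').ne'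
  have hpowC : ∀ {k : ℕ}, 0 < k → (x : ℂ) ^ k ≠ 1 := fun hk => by
    exact_mod_cast sub_ne_zero.mp (hpow hk)
  have hx0 : (x : ℂ) ≠ 0 := by exact_mod_cast (zero_lt_one.trans hx).ne'
  have h : (x ^ a + 1) * (x ^ A + 1) / ((x ^ a - 1) * (x ^ A - 1))
        + (x ^ b + 1) * (x ^ B + 1) / ((x ^ b - 1) * (x ^ B - 1))
      = (x ^ c + 1) * (x ^ C + 1) / ((x ^ c - 1) * (x ^ C - 1)) + 1 := by
    exact_mod_cast heq x hx0 (hpowC ha) (hpowC (ha.trans_le haA)) (hpowC hb)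
      (hpowC (hb.trans_le hbB)) (hpowC hc) (hpowC (hc.trans_le hcC))
  have := hpow ha
  have := hpow hb
  have := hpow hc
  have := hpow (ha.trans_le haA)
  have := hpow (hb.trans_le hbB)
  have := hpow (hc.trans_le hcC)
  field_simp at h
  simp only [Set.mem_ofPred_eq, pairNum, pairDen, eval_mul, eval_add, eval_sub, eval_pow, eval_X,
    eval_one]
  linear_combination h / 2

end WeightIdentity

/-- Theorem 2.3: L-rigid sets with m = 3, n = 2 are quasilinear. -/
theorem stmt_8 (a₁ a₂ b₁ b₂ c₁ c₂ : ℕ)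
    (ha : 0 < a₁) (hb : 0 < b₁) (hc : 0 < c₁)
    (ha' : a₁ ≤ a₂) (hb' : b₁ ≤ b₂) (hc' : c₁ ≤ c₂)
    (heq : ∀ z : ℂ, z ≠ 0 → z ^ a₁ ≠ 1 → z ^ a₂ ≠ 1 → z ^ b₁ ≠ 1 → z ^ b₂ ≠ 1 →
      z ^ c₁ ≠ 1 → z ^ c₂ ≠ 1 →
      (z ^ a₁ + 1) * (z ^ a₂ + 1) / ((z ^ a₁ - 1) * (z ^ a₂ - 1))
        + (z ^ b₁ + 1) * (z ^ b₂ + 1) / ((z ^ b₁ - 1) * (z ^ b₂ - 1))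
      = (z ^ c₁ + 1) * (z ^ c₂ + 1) / ((z ^ c₁ - 1) * (z ^ c₂ - 1)) + 1) :
    a₂ = b₂ ∧ a₂ = a₁ + b₁ ∧ ((c₁ = a₁ ∧ c₂ = b₁) ∨ (c₁ = b₁ ∧ c₂ = a₁)) := by
  have h := WeightIdentity.of_forall ha hb hc ha' hb' hc' heq
  rcases le_total a₁ b₁ with hab | hba
  · obtain ⟨hc₁, hc₂, ha₂, hb₂⟩ := h.quasilinear ha hb hc ha' hb' hc' hab
    exact ⟨ha₂.trans hb₂.symm, ha₂, Or.inl ⟨hc₁, hc₂⟩⟩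
  · obtain ⟨hc₁, hc₂, hb₂, ha₂⟩ := h.symm.quasilinear hb ha hc hb' ha' hc' hba
    exact ⟨ha₂.trans hb₂.symm, ha₂.trans (add_comm _ _), Or.inr ⟨hc₁, hc₂⟩⟩
end

section
/- Under the hypotheses of the m=3, n=2 rigidity equation — positive integers a_1 ≤ a_2, b_1 ≤ b_2, c_1 ≤ c_2 with a_2 ≤ b_2 satisfying (z^{a_1}+1)(z^{a_2}+1)/((z^{a_1}−1)(z^{a_2}−1)) + (z^{b_1}+1)(z^{b_2}+1)/((z^{b_1}−1)(z^{b_2}−1)) = (z^{c_1}+1)(z^{c_2}+1)/((z^{c_1}−1)(z^{c_2}−1)) + 1 identically — one has c_2 < b_2. -/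
/-!
Writing `T_p = ∑_{k ≥ 1} X^{kp} = X^p / (1 - X^p)`, one has `(1 + X^p)/(1 - X^p) = 1 + 2 T_p`, so
the rigidity equation becomes the identity `P(a₁,a₂) + P(b₁,b₂) = P(c₁,c₂)` of power series with
natural coefficients, where `P(p,q) = T_p + T_q + 2 T_p T_q`. The series `P(p,q)` starts at `X^p`,
and below `X^{p+q}` it only records which of `p`, `q` divide the exponent. Since no cancellation
can occur, comparing lowest terms gives `c₁ = min a₁ b₁`. If moreover `b₂ ≤ c₂`, the coefficient
of `X^{b₂}` (when `b₂ < c₂`), of `X^{b₁}` (when `c = (a₁, b₂)`) or of `X^{a₁}` (when `c = b`) is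
strictly larger on the left.
-/

open PowerSeries

section ClearedRigidity

variable {R : Type*} [CommRing R]

/-- The rigidity equation `ρ(x₁,x₂) + ρ(y₁,y₂) = ρ(w₁,w₂) + 1`, with
`ρ(x,y) = (1 + x)(1 + y)/((1 - x)(1 - y))`, multiplied by all six denominators. -/
def clearedRigidity (x₁ x₂ y₁ y₂ w₁ w₂ : R) : R :=
  (1 + x₁) * (1 + x₂) * (1 - y₁) * (1 - y₂) * (1 - w₁) * (1 - w₂)
    + (1 + y₁) * (1 + y₂) * (1 - x₁) * (1 - x₂) * (1 - w₁) * (1 - w₂)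
    - (1 + w₁) * (1 + w₂) * (1 - x₁) * (1 - x₂) * (1 - y₁) * (1 - y₂)
    - (1 - x₁) * (1 - x₂) * (1 - y₁) * (1 - y₂) * (1 - w₁) * (1 - w₂)

theorem map_clearedRigidity {S : Type*} [CommRing S] (f : R →+* S) (x₁ x₂ y₁ y₂ w₁ w₂ : R) :
    f (clearedRigidity x₁ x₂ y₁ y₂ w₁ w₂)
      = clearedRigidity (f x₁) (f x₂) (f y₁) (f y₂) (f w₁) (f w₂) := by
  simp [clearedRigidity]

theorem clearedRigidity_eq_zero {K : Type*} [Field K] {x₁ x₂ y₁ y₂ w₁ w₂ : K}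
    (hx₁ : x₁ ≠ 1) (hx₂ : x₂ ≠ 1) (hy₁ : y₁ ≠ 1) (hy₂ : y₂ ≠ 1) (hw₁ : w₁ ≠ 1) (hw₂ : w₂ ≠ 1)
    (h : (x₁ + 1) * (x₂ + 1) / ((x₁ - 1) * (x₂ - 1))
        + (y₁ + 1) * (y₂ + 1) / ((y₁ - 1) * (y₂ - 1))
      = (w₁ + 1) * (w₂ + 1) / ((w₁ - 1) * (w₂ - 1)) + 1) :
    clearedRigidity x₁ x₂ y₁ y₂ w₁ w₂ = 0 := by
  rw [← sub_ne_zero] at hx₁ hx₂ hy₁ hy₂ hw₁ hw₂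
  field_simp at h
  unfold clearedRigidity
  linear_combination h

theorem one_add_eq_of_eq_mul_one_add {x t : R} (h : t = x * (1 + t)) :
    1 + x = (1 + 2 * t) * (1 - x) := by
  linear_combination (-2) * h

theorem isUnit_one_sub_of_eq_mul_one_add {x t : R} (h : t = x * (1 + t)) : IsUnit (1 - x) :=
  IsUnit.of_mul_eq_one (1 + t) (by linear_combination h)

theorem cayley_of_clearedRigidity_eq_zero {x₁ x₂ y₁ y₂ w₁ w₂ t₁ t₂ s₁ s₂ r₁ r₂ : R}
    (hx₁ : t₁ = x₁ * (1 + t₁)) (hx₂ : t₂ = x₂ * (1 + t₂)) (hy₁ : s₁ = y₁ * (1 + s₁))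
    (hy₂ : s₂ = y₂ * (1 + s₂)) (hw₁ : r₁ = w₁ * (1 + r₁)) (hw₂ : r₂ = w₂ * (1 + r₂))
    (h : clearedRigidity x₁ x₂ y₁ y₂ w₁ w₂ = 0) :
    (1 + 2 * t₁) * (1 + 2 * t₂) + (1 + 2 * s₁) * (1 + 2 * s₂) = (1 + 2 * r₁) * (1 + 2 * r₂) + 1 := by
  have hunit : IsUnit ((1 - x₁) * (1 - x₂) * (1 - y₁) * (1 - y₂) * (1 - w₁) * (1 - w₂)) :=
    (((((isUnit_one_sub_of_eq_mul_one_add hx₁).mul (isUnit_one_sub_of_eq_mul_one_add hx₂)).mul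
      (isUnit_one_sub_of_eq_mul_one_add hy₁)).mul (isUnit_one_sub_of_eq_mul_one_add hy₂)).mul
      (isUnit_one_sub_of_eq_mul_one_add hw₁)).mul (isUnit_one_sub_of_eq_mul_one_add hw₂)
  rw [clearedRigidity, one_add_eq_of_eq_mul_one_add hx₁, one_add_eq_of_eq_mul_one_add hx₂,
    one_add_eq_of_eq_mul_one_add hy₁, one_add_eq_of_eq_mul_one_add hy₂,
    one_add_eq_of_eq_mul_one_add hw₁, one_add_eq_of_eq_mul_one_add hw₂] at h
  rw [← sub_eq_zero, ← hunit.mul_right_eq_zero]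
  linear_combination h

end ClearedRigidity

theorem PowerSeries.order_add_eq_min {R : Type*} [Semiring R] [Subsingleton (AddUnits R)]
    (φ ψ : R⟦X⟧) : (φ + ψ).order = min φ.order ψ.order := by
  refine le_antisymm ?_ (min_order_le_order_add φ ψ)
  have key : ∀ φ ψ : R⟦X⟧, (φ + ψ).order ≤ φ.order := fun φ ψ => by
    rcases eq_or_ne φ 0 with rfl | hφ
    · simp
    rw [← coe_toNat_order hφ]
    exact order_le _ fun h => coeff_order hφ (add_eq_zero.mp (by rwa [← map_add])).1
  exact le_min (key φ ψ) (add_comm φ ψ ▸ key ψ φ)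

/-- `X^p / (1 - X^p)` for `0 < p`. -/
noncomputable def multiplesSeries (p : ℕ) : ℕ⟦X⟧ :=
  PowerSeries.mk fun n => if 0 < n ∧ p ∣ n then 1 else 0

/-- `(1 + 2 T_p)(1 + 2 T_q) = 1 + 2 · pairSeries p q`, and `1 + 2 T_p = (1 + X^p)/(1 - X^p)`
for `T_p = multiplesSeries p`. -/
noncomputable def pairSeries (p q : ℕ) : ℕ⟦X⟧ :=
  multiplesSeries p + multiplesSeries q + 2 • (multiplesSeries p * multiplesSeries q)

section SeriesCoefficients

variable {p q e : ℕ}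

theorem coeff_multiplesSeries (p n : ℕ) :
    coeff n (multiplesSeries p) = if 0 < n ∧ p ∣ n then 1 else 0 :=
  coeff_mk _ _

theorem coeff_multiplesSeries_self (hp : 0 < p) : coeff p (multiplesSeries p) = 1 := by
  simp [coeff_multiplesSeries, hp]

theorem coeff_multiplesSeries_of_lt (h : e < p) : coeff e (multiplesSeries p) = 0 := by
  rw [coeff_multiplesSeries, if_neg]
  rintro ⟨he, hpe⟩
  exact absurd (Nat.le_of_dvd he hpe) (not_le.mpr h)

theorem le_order_multiplesSeries (p : ℕ) : (p : ℕ∞) ≤ (multiplesSeries p).order :=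
  nat_le_order _ _ fun _ => coeff_multiplesSeries_of_lt

theorem multiplesSeries_eq_X_pow_mul (hp : 0 < p) :
    multiplesSeries p = X ^ p * (1 + multiplesSeries p) := by
  ext n
  rw [coeff_X_pow_mul']
  split_ifs with h
  · obtain ⟨k, rfl⟩ := Nat.exists_eq_add_of_le h
    simp only [coeff_multiplesSeries, coeff_one, map_add, Nat.add_sub_cancel_left,
      Nat.dvd_add_self_left]
    rcases Nat.eq_zero_or_pos k with rfl | hk
    · simp [hp.ne']
    · simp [hk, hk.ne']
  · exact coeff_multiplesSeries_of_lt (not_le.mp h)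

theorem coeff_pairSeries_of_lt_add (h : e < p + q) :
    coeff e (pairSeries p q) = coeff e (multiplesSeries p) + coeff e (multiplesSeries q) := by
  have : coeff e (multiplesSeries p * multiplesSeries q) = 0 :=
    coeff_of_lt_order _ <| (by exact_mod_cast h : (e : ℕ∞) < p + q).trans_le <|
      (add_le_add (le_order_multiplesSeries p) (le_order_multiplesSeries q)).trans (le_order_mul _ _)
  simp only [pairSeries, map_add, map_nsmul, this, smul_zero, add_zero]

theorem le_coeff_pairSeries (p q e : ℕ) :
    coeff e (multiplesSeries p) + coeff e (multiplesSeries q) ≤ coeff e (pairSeries p q) := by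
  simp [pairSeries]

theorem order_pairSeries (hp : 0 < p) (hpq : p ≤ q) : (pairSeries p q).order = p := by
  refine order_eq_nat.mpr ⟨?_, fun i hi => ?_⟩
  · have := le_coeff_pairSeries p q p
    rw [coeff_multiplesSeries_self hp] at this
    omega
  · simp only [coeff_pairSeries_of_lt_add (by omega : i < p + q), coeff_multiplesSeries_of_lt hi,
      coeff_multiplesSeries_of_lt (hi.trans_le hpq), add_zero]

end SeriesCoefficients

theorem clearedRigidity_X_pow_eq_zero {a₁ a₂ b₁ b₂ c₁ c₂ : ℕ} (ha₁ : 0 < a₁) (ha₂ : 0 < a₂)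
    (hb₁ : 0 < b₁) (hb₂ : 0 < b₂) (hc₁ : 0 < c₁) (hc₂ : 0 < c₂)
    (heq : ∀ z : ℂ, z ≠ 0 → z ^ a₁ ≠ 1 → z ^ a₂ ≠ 1 → z ^ b₁ ≠ 1 → z ^ b₂ ≠ 1 →
      z ^ c₁ ≠ 1 → z ^ c₂ ≠ 1 →
      (z ^ a₁ + 1) * (z ^ a₂ + 1) / ((z ^ a₁ - 1) * (z ^ a₂ - 1))
        + (z ^ b₁ + 1) * (z ^ b₂ + 1) / ((z ^ b₁ - 1) * (z ^ b₂ - 1))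
      = (z ^ c₁ + 1) * (z ^ c₂ + 1) / ((z ^ c₁ - 1) * (z ^ c₂ - 1)) + 1) :
    clearedRigidity (Polynomial.X ^ a₁ : Polynomial ℂ) (Polynomial.X ^ a₂) (Polynomial.X ^ b₁)
      (Polynomial.X ^ b₂) (Polynomial.X ^ c₁) (Polynomial.X ^ c₂) = 0 := by
  apply Polynomial.eq_zero_of_infinite_isRoot
  refine ((Set.Ioo_infinite zero_lt_one).image Complex.ofReal_injective.injOn).mono ?_
  rintro _ ⟨r, ⟨hr₀, hr₁⟩, rfl⟩
  have hpow : ∀ k, 0 < k → (r : ℂ) ^ k ≠ 1 := fun k hk => by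
    rw [← Complex.ofReal_pow, Ne, Complex.ofReal_eq_one]
    exact (pow_lt_one₀ hr₀.le hr₁ hk.ne').ne
  rw [Set.mem_ofPred_eq, Polynomial.IsRoot.def, ← Polynomial.coe_evalRingHom, map_clearedRigidity]
  simp only [Polynomial.coe_evalRingHom, Polynomial.eval_pow, Polynomial.eval_X]
  exact clearedRigidity_eq_zero (hpow _ ha₁) (hpow _ ha₂) (hpow _ hb₁) (hpow _ hb₂) (hpow _ hc₁)
    (hpow _ hc₂) (heq _ (Complex.ofReal_ne_zero.mpr hr₀.ne') (hpow _ ha₁) (hpow _ ha₂)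
      (hpow _ hb₁) (hpow _ hb₂) (hpow _ hc₁) (hpow _ hc₂))

theorem pairSeries_add_pairSeries {a₁ a₂ b₁ b₂ c₁ c₂ : ℕ} (ha₁ : 0 < a₁) (ha₂ : 0 < a₂)
    (hb₁ : 0 < b₁) (hb₂ : 0 < b₂) (hc₁ : 0 < c₁) (hc₂ : 0 < c₂)
    (h : clearedRigidity (Polynomial.X ^ a₁ : Polynomial ℂ) (Polynomial.X ^ a₂)
      (Polynomial.X ^ b₁) (Polynomial.X ^ b₂) (Polynomial.X ^ c₁) (Polynomial.X ^ c₂) = 0) :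
    pairSeries a₁ a₂ + pairSeries b₁ b₂ = pairSeries c₁ c₂ := by
  replace h := congrArg Polynomial.coeToPowerSeries.ringHom h
  simp only [map_clearedRigidity, map_pow, Polynomial.coeToPowerSeries.ringHom_apply,
    Polynomial.coe_X, map_zero] at h
  have hT : ∀ {p}, 0 < p → map (Nat.castRingHom ℂ) (multiplesSeries p)
      = X ^ p * (1 + map (Nat.castRingHom ℂ) (multiplesSeries p)) := fun hp => by
    simpa using congrArg (map (Nat.castRingHom ℂ)) (multiplesSeries_eq_X_pow_mul hp)
  have hcayley :=
    cayley_of_clearedRigidity_eq_zero (hT ha₁) (hT ha₂) (hT hb₁) (hT hb₂) (hT hc₁) (hT hc₂) h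
  have htwo : (2 : ℂ⟦X⟧) ≠ 0 := by
    rw [← map_ofNat C 2]
    exact (map_ne_zero_iff _ C_injective).mpr two_ne_zero
  apply map_injective (Nat.castRingHom ℂ) Nat.cast_injective
  refine mul_left_cancel₀ htwo ?_
  simp only [pairSeries, map_add, map_nsmul, map_mul]
  linear_combination hcayley

theorem eq_min_of_pairSeries_add_eq {a₁ a₂ b₁ b₂ c₁ c₂ : ℕ} (ha₁ : 0 < a₁) (ha : a₁ ≤ a₂)
    (hb₁ : 0 < b₁) (hb : b₁ ≤ b₂) (hc₁ : 0 < c₁) (hc : c₁ ≤ c₂)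
    (h : pairSeries a₁ a₂ + pairSeries b₁ b₂ = pairSeries c₁ c₂) : c₁ = min a₁ b₁ := by
  have := congrArg order h
  rw [order_add_eq_min, order_pairSeries ha₁ ha, order_pairSeries hb₁ hb,
    order_pairSeries hc₁ hc, ← Nat.mono_cast.map_min] at this
  exact_mod_cast this.symm

theorem lt_of_pairSeries_add_eq {a₁ a₂ b₁ b₂ c₁ c₂ : ℕ} (ha₁ : 0 < a₁) (ha : a₁ ≤ a₂)
    (hb₁ : 0 < b₁) (hb : b₁ ≤ b₂) (hc₁ : 0 < c₁) (hc : c₁ ≤ c₂)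
    (h : pairSeries a₁ a₂ + pairSeries b₁ b₂ = pairSeries c₁ c₂) : c₂ < b₂ := by
  have hcoeff e : coeff e (pairSeries a₁ a₂) + coeff e (pairSeries b₁ b₂)
      = coeff e (pairSeries c₁ c₂) := by
    rw [← map_add, h]
  have hc₁_eq : c₁ = a₁ ∨ c₁ = b₁ :=
    eq_min_of_pairSeries_add_eq ha₁ ha hb₁ hb hc₁ hc h ▸ min_choice a₁ b₁
  have hb₂_coeff := coeff_multiplesSeries_self (hb₁.trans_le hb)
  by_contra! hbc
  rcases hbc.lt_or_eq with hlt | rfl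
  · have he := hcoeff b₂
    rw [coeff_pairSeries_of_lt_add (p := c₁) (by omega), coeff_multiplesSeries_of_lt hlt] at he
    have := le_coeff_pairSeries a₁ a₂ b₂
    have := le_coeff_pairSeries b₁ b₂ b₂
    rcases hc₁_eq with rfl | rfl <;> omega
  rcases hc₁_eq with rfl | rfl
  · have he := hcoeff b₁
    rw [coeff_pairSeries_of_lt_add (p := c₁) (q := b₂) (by omega)] at he
    have := le_coeff_pairSeries c₁ a₂ b₁
    have := le_coeff_pairSeries b₁ b₂ b₁
    have := coeff_multiplesSeries_self hb₁
    omega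
  · have he := hcoeff a₁
    have := le_coeff_pairSeries a₁ a₂ a₁
    have := coeff_multiplesSeries_self ha₁
    omega

theorem stmt_9_general (a₁ a₂ b₁ b₂ c₁ c₂ : ℕ)
    (ha : 0 < a₁) (hb : 0 < b₁) (hc : 0 < c₁)
    (ha' : a₁ ≤ a₂) (hb' : b₁ ≤ b₂) (hc' : c₁ ≤ c₂)
    (heq : ∀ z : ℂ, z ≠ 0 → z ^ a₁ ≠ 1 → z ^ a₂ ≠ 1 → z ^ b₁ ≠ 1 → z ^ b₂ ≠ 1 →
      z ^ c₁ ≠ 1 → z ^ c₂ ≠ 1 →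
      (z ^ a₁ + 1) * (z ^ a₂ + 1) / ((z ^ a₁ - 1) * (z ^ a₂ - 1))
        + (z ^ b₁ + 1) * (z ^ b₂ + 1) / ((z ^ b₁ - 1) * (z ^ b₂ - 1))
      = (z ^ c₁ + 1) * (z ^ c₂ + 1) / ((z ^ c₁ - 1) * (z ^ c₂ - 1)) + 1) :
    c₂ < b₂ := by
  have ha₂ := ha.trans_le ha'
  have hb₂ := hb.trans_le hb'
  have hc₂ := hc.trans_le hc'
  have hpoly := clearedRigidity_X_pow_eq_zero ha ha₂ hb hb₂ hc hc₂ heq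
  exact lt_of_pairSeries_add_eq ha ha' hb hb' hc hc'
    (pairSeries_add_pairSeries ha ha₂ hb hb₂ hc hc₂ hpoly)

/-- First step of Theorem 2.3: under the m = 3, n = 2 rigidity equation with
a₂ ≤ b₂, one has c₂ < b₂. -/
theorem stmt_9 (a₁ a₂ b₁ b₂ c₁ c₂ : ℕ)
    (ha : 0 < a₁) (hb : 0 < b₁) (hc : 0 < c₁)
    (ha' : a₁ ≤ a₂) (hb' : b₁ ≤ b₂) (hc' : c₁ ≤ c₂) (hab : a₂ ≤ b₂)
    (heq : ∀ z : ℂ, z ≠ 0 → z ^ a₁ ≠ 1 → z ^ a₂ ≠ 1 → z ^ b₁ ≠ 1 → z ^ b₂ ≠ 1 →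
      z ^ c₁ ≠ 1 → z ^ c₂ ≠ 1 →
      (z ^ a₁ + 1) * (z ^ a₂ + 1) / ((z ^ a₁ - 1) * (z ^ a₂ - 1))
        + (z ^ b₁ + 1) * (z ^ b₂ + 1) / ((z ^ b₁ - 1) * (z ^ b₂ - 1))
      = (z ^ c₁ + 1) * (z ^ c₂ + 1) / ((z ^ c₁ - 1) * (z ^ c₂ - 1)) + 1) :
    c₂ < b₂ :=
  stmt_9_general a₁ a₂ b₁ b₂ c₁ c₂ ha hb hc ha' hb' hc' heq
end

section
/- Under the hypotheses of the m=3, n=2 rigidity equation with a_2 ≤ b_2 (notation as before), one has a_2 = b_2, i.e., the maximum power b_2 occurs in at least two rows. -/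
/-!
Write `f n z = (z ^ n + 1) / (z ^ n - 1)`. Near a point `η`, `f n` has a simple pole with residue
`2 η / n` if `η ^ n = 1` and is regular otherwise, so comparing the coefficients of `(z - η)⁻²`
and `(z - η)⁻¹` on both sides of `f a₁ f a₂ + f b₁ f b₂ = f c₁ f c₂ + 1` constrains the exponents.

Suppose `a₂ < b₂`. At a primitive root of unity whose order `M` is a strict maximum among the
exponents, only one product has a pole, so the other factor `f p` of that product vanishes there:
`ζ ^ p = -1`, i.e. `M = 2 p`. At a primitive `p`-th root `η`, the `(z - η)⁻²`-coefficient of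
`f p f (2p)` is `2 (η / p)²` while every other product contributes `0` or `4 (η / p)²`, which is
impossible. With `M = c₂` this gives `c₂ ≤ b₂`; `c₂ = b₂` forces `(b₁, b₂) = (c₁, c₂)`, which
contradicts the double pole at `1`; and then `M = b₂` gives the final contradiction.
-/

open Filter Topology

noncomputable def powRatio (n : ℕ) (z : ℂ) : ℂ := (z ^ n + 1) / (z ^ n - 1)

/-- The residue of `powRatio n` at `η`. -/
noncomputable def residue (n : ℕ) (η : ℂ) : ℂ := if η ^ n = 1 then 2 * η / n else 0

theorem tendsto_powRatio {n : ℕ} {η : ℂ} (h : η ^ n ≠ 1) :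
    Tendsto (powRatio n) (𝓝[≠] η) (𝓝 (powRatio n η)) :=
  ((continuous_pow n).add continuous_const).continuousAt.div
    ((continuous_pow n).sub continuous_const).continuousAt (sub_ne_zero.mpr h)
    |>.tendsto.mono_left nhdsWithin_le_nhds

theorem tendsto_sub_mul_powRatio (n : ℕ) (η : ℂ) :
    Tendsto (fun z => (z - η) * powRatio n z) (𝓝[≠] η) (𝓝 (residue n η)) := by
  unfold residue
  split_ifs with h
  · rcases n.eq_zero_or_pos with rfl | hn
    · simp [powRatio]
    have hη : η ≠ 0 := by rintro rfl; simp [hn.ne'] at h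
    have hslope := (hasDerivAt_iff_tendsto_slope.mp (hasDerivAt_pow n η)).inv₀
      (by simp [hn.ne', hη])
    have hnum : Tendsto (fun z : ℂ => z ^ n + 1) (𝓝[≠] η) (𝓝 (η ^ n + 1)) :=
      (Continuous.tendsto (by fun_prop) η).mono_left nhdsWithin_le_nhds
    convert hnum.mul hslope using 1
    · ext z
      simp only [powRatio, slope_def_field, h, inv_div]
      ring
    · have hinv : (η ^ (n - 1))⁻¹ = η :=
        inv_eq_of_mul_eq_one_left (by rw [← pow_succ', Nat.sub_add_cancel hn, h])
      rw [h, mul_inv, hinv]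
      congr 1
      ring
  · have hlin : Tendsto (fun z : ℂ => z - η) (𝓝[≠] η) (𝓝 (η - η)) :=
      (Continuous.tendsto (by fun_prop) η).mono_left nhdsWithin_le_nhds
    simpa using hlin.mul (tendsto_powRatio h)

theorem residue_eq_zero_iff {n : ℕ} {η : ℂ} (hn : n ≠ 0) (hη : η ≠ 0) :
    residue n η = 0 ↔ η ^ n ≠ 1 := by
  unfold residue
  split_ifs with h <;> simp [h, hn, hη]

theorem pow_eq_neg_one_of_powRatio_eq_zero {n : ℕ} {z : ℂ} (h1 : z ^ n ≠ 1)
    (h : powRatio n z = 0) : z ^ n = -1 := by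
  rw [powRatio, div_eq_zero_iff, sub_eq_zero] at h
  exact eq_neg_of_add_eq_zero_left (h.resolve_right h1)

theorem pow_eq_pow_of_powRatio_eq {m n : ℕ} {z : ℂ} (hm : z ^ m ≠ 1) (hn : z ^ n ≠ 1)
    (h : powRatio m z = powRatio n z) : z ^ m = z ^ n := by
  rw [powRatio, powRatio, div_eq_div_iff (sub_ne_zero.mpr hm) (sub_ne_zero.mpr hn)] at h
  linear_combination -h / 2

namespace IsPrimitiveRoot

variable {ζ : ℂ} {d : ℕ}

theorem eq_of_pow_eq_one (hζ : IsPrimitiveRoot ζ d) {x : ℕ} (hx : x ≠ 0) (hxd : x ≤ d)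
    (h : ζ ^ x = 1) : x = d :=
  le_antisymm hxd (Nat.le_of_dvd (Nat.pos_of_ne_zero hx) ((hζ.pow_eq_one_iff_dvd x).mp h))

theorem eq_two_mul_of_pow_eq_neg_one (hζ : IsPrimitiveRoot ζ d) {x : ℕ} (hxd : x ≤ d)
    (h : ζ ^ x = -1) : d = 2 * x := by
  have hx : x ≠ 0 := by rintro rfl; norm_num at h
  have hxd' : x ≠ d := by rintro rfl; norm_num [hζ.pow_eq_one] at h
  refine (Nat.eq_of_dvd_of_lt_two_mul (by omega) ?_ (by omega)).symm
  rw [← hζ.pow_eq_one_iff_dvd, pow_mul', h]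
  norm_num

theorem residue_eq_zero_of_lt (hζ : IsPrimitiveRoot ζ d) {x : ℕ} (hx : x ≠ 0) (hxd : x < d) :
    residue x ζ = 0 := by
  simp [residue, hζ.pow_ne_one_of_pos_of_lt hx hxd]

theorem residue_self (hζ : IsPrimitiveRoot ζ d) : residue d ζ = 2 * ζ / d := by
  simp [residue, hζ.pow_eq_one]

theorem residue_self_ne_zero (hζ : IsPrimitiveRoot ζ d) (hd : d ≠ 0) : residue d ζ ≠ 0 := by
  simp [hζ.residue_self, hζ.ne_zero hd, hd]

theorem residue_two_mul (hζ : IsPrimitiveRoot ζ d) (hd : d ≠ 0) :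
    residue (2 * d) ζ = ζ / d := by
  rw [residue, if_pos (by rw [pow_mul', hζ.pow_eq_one, one_pow])]
  field_simp
  push_cast
  ring

theorem residue_mul_residue_of_lt_two_mul (hζ : IsPrimitiveRoot ζ d) {x y : ℕ}
    (hx : x ≠ 0) (hxd : x < 2 * d) (hy : y ≠ 0) (hyd : y < 2 * d) :
    residue x ζ * residue y ζ = (ζ / d) ^ 2 * if x = d ∧ y = d then 4 else 0 := by
  have hr : ∀ w, w ≠ 0 → w < 2 * d → residue w ζ = if w = d then 2 * ζ / d else 0 := by
    intro w hw hwd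
    by_cases hwe : w = d
    · simp [hwe, hζ.residue_self]
    · simp only [residue, if_neg hwe, ite_eq_right_iff]
      intro h
      exact absurd (Nat.eq_of_dvd_of_lt_two_mul hw ((hζ.pow_eq_one_iff_dvd w).mp h) hwd) hwe
  rw [hr x hx hxd, hr y hy hyd]
  split_ifs <;> first | ring1 | simp_all

end IsPrimitiveRoot

def RigidityEquation (a₁ a₂ b₁ b₂ c₁ c₂ : ℕ) : Prop :=
  ∀ᶠ z in cofinite, powRatio a₁ z * powRatio a₂ z + powRatio b₁ z * powRatio b₂ z
    = powRatio c₁ z * powRatio c₂ z + 1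

theorem eventually_cofinite_pow_ne_one {k : ℕ} (hk : 0 < k) : ∀ᶠ z : ℂ in cofinite, z ^ k ≠ 1 :=
  eventually_cofinite.mpr <| (Polynomial.nthRoots k (1 : ℂ)).toFinset.finite_toSet.subset
    fun z hz => by simpa [Polynomial.mem_nthRoots hk] using hz

theorem rigidityEquation_of_forall {a₁ a₂ b₁ b₂ c₁ c₂ : ℕ}
    (ha₁ : 0 < a₁) (ha₂ : 0 < a₂) (hb₁ : 0 < b₁) (hb₂ : 0 < b₂) (hc₁ : 0 < c₁) (hc₂ : 0 < c₂)
    (heq : ∀ z : ℂ, z ≠ 0 → z ^ a₁ ≠ 1 → z ^ a₂ ≠ 1 → z ^ b₁ ≠ 1 → z ^ b₂ ≠ 1 →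
      z ^ c₁ ≠ 1 → z ^ c₂ ≠ 1 →
      (z ^ a₁ + 1) * (z ^ a₂ + 1) / ((z ^ a₁ - 1) * (z ^ a₂ - 1))
        + (z ^ b₁ + 1) * (z ^ b₂ + 1) / ((z ^ b₁ - 1) * (z ^ b₂ - 1))
      = (z ^ c₁ + 1) * (z ^ c₂ + 1) / ((z ^ c₁ - 1) * (z ^ c₂ - 1)) + 1) :
    RigidityEquation a₁ a₂ b₁ b₂ c₁ c₂ := by
  filter_upwards [eventually_cofinite_ne 0, eventually_cofinite_pow_ne_one ha₁,
    eventually_cofinite_pow_ne_one ha₂, eventually_cofinite_pow_ne_one hb₁,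
    eventually_cofinite_pow_ne_one hb₂, eventually_cofinite_pow_ne_one hc₁,
    eventually_cofinite_pow_ne_one hc₂] with z h0 h1 h2 h3 h4 h5 h6
  simpa only [powRatio, mul_div_mul_comm] using heq z h0 h1 h2 h3 h4 h5 h6

namespace RigidityEquation

variable {a₁ a₂ b₁ b₂ c₁ c₂ : ℕ}

theorem residue_identity (h : RigidityEquation a₁ a₂ b₁ b₂ c₁ c₂) (η : ℂ) :
    residue a₁ η * residue a₂ η + residue b₁ η * residue b₂ η
      = residue c₁ η * residue c₂ η := by
  have hsq : Tendsto (fun z : ℂ => (z - η) ^ 2) (𝓝[≠] η) (𝓝 ((η - η) ^ 2)) :=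
    (Continuous.tendsto (by fun_prop) η).mono_left nhdsWithin_le_nhds
  have hlhs := ((tendsto_sub_mul_powRatio a₁ η).mul (tendsto_sub_mul_powRatio a₂ η)).add
    ((tendsto_sub_mul_powRatio b₁ η).mul (tendsto_sub_mul_powRatio b₂ η))
  have hrhs := ((tendsto_sub_mul_powRatio c₁ η).mul (tendsto_sub_mul_powRatio c₂ η)).add hsq
  rw [sub_self, zero_pow two_ne_zero, add_zero] at hrhs
  refine tendsto_nhds_unique (hlhs.congr' ?_) hrhs
  filter_upwards [h.filter_mono (nhdsNE_le_cofinite η)] with z hz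
  linear_combination (z - η) ^ 2 * hz

theorem powRatio_residue_identity (h : RigidityEquation a₁ a₂ b₁ b₂ c₁ c₂) {η : ℂ}
    (ha : η ^ a₁ ≠ 1) (hb : η ^ b₁ ≠ 1) (hc : η ^ c₁ ≠ 1) :
    powRatio a₁ η * residue a₂ η + powRatio b₁ η * residue b₂ η
      = powRatio c₁ η * residue c₂ η := by
  have hlin : Tendsto (fun z : ℂ => z - η) (𝓝[≠] η) (𝓝 (η - η)) :=
    (Continuous.tendsto (by fun_prop) η).mono_left nhdsWithin_le_nhds
  have hlhs := ((tendsto_powRatio ha).mul (tendsto_sub_mul_powRatio a₂ η)).add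
    ((tendsto_powRatio hb).mul (tendsto_sub_mul_powRatio b₂ η))
  have hrhs := ((tendsto_powRatio hc).mul (tendsto_sub_mul_powRatio c₂ η)).add hlin
  rw [sub_self, add_zero] at hrhs
  refine tendsto_nhds_unique (hlhs.congr' ?_) hrhs
  filter_upwards [h.filter_mono (nhdsNE_le_cofinite η)] with z hz
  linear_combination (z - η) * hz

theorem c₂_le_b₂ (h : RigidityEquation a₁ a₂ b₁ b₂ c₁ c₂) (ha : 0 < a₁) (hb : 0 < b₁)
    (hc : 0 < c₁) (ha' : a₁ ≤ a₂) (hb' : b₁ ≤ b₂) (hc' : c₁ ≤ c₂) (hab : a₂ ≤ b₂) :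
    c₂ ≤ b₂ := by
  by_contra! hbc
  have hc₂ : c₂ ≠ 0 := by omega
  obtain ⟨ζ, hζ⟩ : ∃ ζ : ℂ, IsPrimitiveRoot ζ c₂ := ⟨_, Complex.isPrimitiveRoot_exp c₂ hc₂⟩
  have hR := hζ.residue_self_ne_zero hc₂
  have hr : ∀ x, x ≠ 0 → x < c₂ → residue x ζ = 0 := fun _ => hζ.residue_eq_zero_of_lt
  have hpow : ∀ x, x ≠ 0 → x < c₂ → ζ ^ x ≠ 1 := fun _ => hζ.pow_ne_one_of_pos_of_lt
  have hc₁ : ζ ^ c₁ ≠ 1 := by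
    have hid := h.residue_identity ζ
    rw [hr a₁ (by omega) (by omega), hr b₁ (by omega) (by omega), zero_mul, zero_mul,
      zero_add, eq_comm, mul_eq_zero, or_iff_left hR] at hid
    exact (residue_eq_zero_iff hc.ne' (hζ.ne_zero hc₂)).mp hid
  have hc₂_eq : c₂ = 2 * c₁ := by
    have hid := h.powRatio_residue_identity (hpow a₁ (by omega) (by omega))
      (hpow b₁ (by omega) (by omega)) hc₁
    rw [hr a₂ (by omega) (by omega), hr b₂ (by omega) (by omega), mul_zero, mul_zero,
      zero_add, eq_comm, mul_eq_zero, or_iff_left hR] at hid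
    exact hζ.eq_two_mul_of_pow_eq_neg_one hc' (pow_eq_neg_one_of_powRatio_eq_zero hc₁ hid)
  obtain ⟨η, hη⟩ : ∃ η : ℂ, IsPrimitiveRoot η c₁ := ⟨_, Complex.isPrimitiveRoot_exp c₁ hc.ne'⟩
  have hid := h.residue_identity η
  rw [hη.residue_mul_residue_of_lt_two_mul (by omega) (by omega) (by omega) (by omega),
    hη.residue_mul_residue_of_lt_two_mul (by omega) (by omega) (by omega) (by omega),
    hc₂_eq, hη.residue_self, hη.residue_two_mul hc.ne'] at hid
  have hu : (η / c₁) ^ 2 ≠ 0 :=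
    pow_ne_zero 2 (div_ne_zero (hη.ne_zero hc.ne') (Nat.cast_ne_zero.mpr hc.ne'))
  have key : ((if a₁ = c₁ ∧ a₂ = c₁ then 4 else 0) + (if b₁ = c₁ ∧ b₂ = c₁ then 4 else 0) : ℂ)
      = 2 :=
    mul_left_cancel₀ hu (by linear_combination hid)
  split_ifs at key <;> norm_num at key

theorem c₂_ne_b₂ (h : RigidityEquation a₁ a₂ b₁ b₂ c₁ c₂) (ha : 0 < a₁) (hb : 0 < b₁)
    (hc : 0 < c₁) (ha' : a₁ ≤ a₂) (hb' : b₁ ≤ b₂) (hc' : c₁ ≤ c₂) (hab : a₂ < b₂) :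
    c₂ ≠ b₂ := by
  intro hcb
  subst hcb
  have hc₂ : c₂ ≠ 0 := by omega
  obtain ⟨ζ, hζ⟩ : ∃ ζ : ℂ, IsPrimitiveRoot ζ c₂ := ⟨_, Complex.isPrimitiveRoot_exp c₂ hc₂⟩
  have hz : ∀ x, x ≠ 0 → (residue x ζ = 0 ↔ ζ ^ x ≠ 1) :=
    fun _ hx => residue_eq_zero_iff hx (hζ.ne_zero hc₂)
  have hR := hζ.residue_self_ne_zero hc₂
  have hra : residue a₂ ζ = 0 := hζ.residue_eq_zero_of_lt (by omega) hab
  have hbc : b₁ = c₁ := by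
    have hres : residue b₁ ζ = residue c₁ ζ := by
      have hid := h.residue_identity ζ
      rw [hra, mul_zero, zero_add] at hid
      exact mul_right_cancel₀ hR hid
    have hpow : ζ ^ b₁ = 1 ↔ ζ ^ c₁ = 1 := by
      have hiff := hz b₁ hb.ne'
      rw [hres, hz c₁ hc.ne'] at hiff
      exact not_iff_not.mp hiff.symm
    by_cases hb₁ : ζ ^ b₁ = 1
    · rw [hζ.eq_of_pow_eq_one hb.ne' hb' hb₁, hζ.eq_of_pow_eq_one hc.ne' hc' (hpow.mp hb₁)]
    · have hc₁ : ζ ^ c₁ ≠ 1 := hpow.not.mp hb₁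
      have hid := h.powRatio_residue_identity
        (hζ.pow_ne_one_of_pos_of_lt ha.ne' (by omega)) hb₁ hc₁
      rw [hra, mul_zero, zero_add] at hid
      refine hζ.pow_inj ?_ ?_ (pow_eq_pow_of_powRatio_eq hb₁ hc₁ (mul_right_cancel₀ hR hid))
      · exact lt_of_le_of_ne hb' fun he => hb₁ (he ▸ hζ.pow_eq_one)
      · exact lt_of_le_of_ne hc' fun he => hc₁ (he ▸ hζ.pow_eq_one)
  have hid := h.residue_identity 1
  rw [hbc, add_eq_right, mul_eq_zero, residue_eq_zero_iff ha.ne' one_ne_zero,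
    residue_eq_zero_iff (by omega) one_ne_zero] at hid
  simp at hid

theorem b₂_eq_two_mul_b₁ (h : RigidityEquation a₁ a₂ b₁ b₂ c₁ c₂) (ha : 0 < a₁) (hb : 0 < b₁)
    (hc : 0 < c₁) (ha' : a₁ ≤ a₂) (hb' : b₁ ≤ b₂) (hc' : c₁ ≤ c₂) (hab : a₂ < b₂)
    (hcb : c₂ < b₂) : b₂ = 2 * b₁ := by
  have hb₂ : b₂ ≠ 0 := by omega
  obtain ⟨ζ, hζ⟩ : ∃ ζ : ℂ, IsPrimitiveRoot ζ b₂ := ⟨_, Complex.isPrimitiveRoot_exp b₂ hb₂⟩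
  have hR := hζ.residue_self_ne_zero hb₂
  have hr : ∀ x, x ≠ 0 → x < b₂ → residue x ζ = 0 := fun _ => hζ.residue_eq_zero_of_lt
  have hpow : ∀ x, x ≠ 0 → x < b₂ → ζ ^ x ≠ 1 := fun _ => hζ.pow_ne_one_of_pos_of_lt
  have hb₁ : ζ ^ b₁ ≠ 1 := by
    have hid := h.residue_identity ζ
    rw [hr a₂ (by omega) (by omega), hr c₂ (by omega) (by omega), mul_zero, mul_zero,
      zero_add, mul_eq_zero, or_iff_left hR] at hid
    exact (residue_eq_zero_iff hb.ne' (hζ.ne_zero hb₂)).mp hid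
  have hid := h.powRatio_residue_identity (hpow a₁ (by omega) (by omega)) hb₁
    (hpow c₁ (by omega) (by omega))
  rw [hr a₂ (by omega) (by omega), hr c₂ (by omega) (by omega), mul_zero, mul_zero,
    zero_add, mul_eq_zero, or_iff_left hR] at hid
  exact hζ.eq_two_mul_of_pow_eq_neg_one hb' (pow_eq_neg_one_of_powRatio_eq_zero hb₁ hid)

theorem b₂_ne_two_mul_b₁ (h : RigidityEquation a₁ a₂ b₁ b₂ c₁ c₂) (ha : 0 < a₁) (hb : 0 < b₁)
    (hc : 0 < c₁) (ha' : a₁ ≤ a₂) (hc' : c₁ ≤ c₂) (hab : a₂ < 2 * b₁) (hcb : c₂ < 2 * b₁) :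
    b₂ ≠ 2 * b₁ := by
  intro hb₂
  obtain ⟨η, hη⟩ : ∃ η : ℂ, IsPrimitiveRoot η b₁ := ⟨_, Complex.isPrimitiveRoot_exp b₁ hb.ne'⟩
  have hid := h.residue_identity η
  rw [hb₂, hη.residue_self, hη.residue_two_mul hb.ne',
    hη.residue_mul_residue_of_lt_two_mul (x := a₁) (by omega) (by omega) (by omega) (by omega),
    hη.residue_mul_residue_of_lt_two_mul (x := c₁) (by omega) (by omega) (by omega) (by omega)]
    at hid
  have hu : (η / b₁) ^ 2 ≠ 0 :=
    pow_ne_zero 2 (div_ne_zero (hη.ne_zero hb.ne') (Nat.cast_ne_zero.mpr hb.ne'))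
  have key : ((if a₁ = b₁ ∧ a₂ = b₁ then 4 else 0) + 2 : ℂ)
      = if c₁ = b₁ ∧ c₂ = b₁ then 4 else 0 :=
    mul_left_cancel₀ hu (by linear_combination hid)
  split_ifs at key <;> norm_num at key

end RigidityEquation

/-- Second step of Theorem 2.3: under the m = 3, n = 2 rigidity equation with
a₂ ≤ b₂, the maximal power occurs twice: a₂ = b₂. -/
theorem stmt_10 (a₁ a₂ b₁ b₂ c₁ c₂ : ℕ)
    (ha : 0 < a₁) (hb : 0 < b₁) (hc : 0 < c₁)
    (ha' : a₁ ≤ a₂) (hb' : b₁ ≤ b₂) (hc' : c₁ ≤ c₂) (hab : a₂ ≤ b₂)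
    (heq : ∀ z : ℂ, z ≠ 0 → z ^ a₁ ≠ 1 → z ^ a₂ ≠ 1 → z ^ b₁ ≠ 1 → z ^ b₂ ≠ 1 →
      z ^ c₁ ≠ 1 → z ^ c₂ ≠ 1 →
      (z ^ a₁ + 1) * (z ^ a₂ + 1) / ((z ^ a₁ - 1) * (z ^ a₂ - 1))
        + (z ^ b₁ + 1) * (z ^ b₂ + 1) / ((z ^ b₁ - 1) * (z ^ b₂ - 1))
      = (z ^ c₁ + 1) * (z ^ c₂ + 1) / ((z ^ c₁ - 1) * (z ^ c₂ - 1)) + 1) :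
    a₂ = b₂ := by
  have h := rigidityEquation_of_forall ha (by omega) hb (by omega) hc (by omega) heq
  by_contra hne
  have hlt : a₂ < b₂ := lt_of_le_of_ne hab hne
  have hcb : c₂ < b₂ := lt_of_le_of_ne (h.c₂_le_b₂ ha hb hc ha' hb' hc' hab)
    (h.c₂_ne_b₂ ha hb hc ha' hb' hc' hlt)
  have hb₂ := h.b₂_eq_two_mul_b₁ ha hb hc ha' hb' hc' hlt hcb
  exact h.b₂_ne_two_mul_b₁ ha hb hc ha' hc' (hb₂ ▸ hlt) (hb₂ ▸ hcb) hb₂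
end

section
/- Let a_1, b_1, c_1, c_2, a_2 be positive integers with a_2 = a_1 + b_1 satisfying identically in z: (z^{a_2}+1)(z^{a_1+b_1}−1)/((z^{a_2}−1)(z^{a_1}−1)(z^{b_1}−1)) = (z^{c_1+c_2}+1)/((z^{c_1}−1)(z^{c_2}−1)). Then c_1 + c_2 = a_1 + b_1 and {c_1, c_2} = {a_1, b_1}. -/
/-!
Since the identity holds at every real z > 1, clearing denominators (the factor z^{a₁+b₁} - 1
cancels) gives the polynomial identity
(X^{a₁+b₁} + 1)(X^{c₁} - 1)(X^{c₂} - 1) = (X^{c₁+c₂} + 1)(X^{a₁} - 1)(X^{b₁} - 1).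
After expanding, the leading terms and the terms X^{a₁+b₁}, X^{c₁+c₂} cancel, leaving two sums of
four monic monomials; hence the exponent multisets {c₁, c₂, a₁+b₁+c₁, a₁+b₁+c₂} and
{a₁, b₁, c₁+c₂+a₁, c₁+c₂+b₁} agree. Each large exponent exceeds both small ones of the other side,
so {c₁, c₂} = {a₁, b₁}.
-/

open Polynomial

lemma Polynomial.coeff_multiset_sum_X_pow {R : Type*} [Semiring R] (s : Multiset ℕ) (n : ℕ) :
    (s.map fun e => (X : R[X]) ^ e).sum.coeff n = s.count n := by
  induction s using Multiset.induction_on with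
  | empty => simp
  | cons e s ih =>
    simp only [Multiset.map_cons, Multiset.sum_cons, coeff_add, coeff_X_pow, ih,
      Multiset.count_cons]
    split_ifs <;> simp_all [add_comm]

lemma Polynomial.multiset_sum_X_pow_injective {R : Type*} [Semiring R] [CharZero R] :
    Function.Injective fun s : Multiset ℕ => (s.map fun e => (X : R[X]) ^ e).sum := by
  intro s t hst
  ext n
  have := congrArg (coeff · n) hst
  simpa [coeff_multiset_sum_X_pow] using this

lemma Polynomial.eq_of_eval_ofReal_eq {p q : ℂ[X]} {s : Set ℝ} (hs : s.Infinite)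
    (h : ∀ x ∈ s, p.eval (x : ℂ) = q.eval (x : ℂ)) : p = q :=
  eq_of_infinite_eval_eq p q <| (hs.image Complex.ofReal_injective.injOn).mono <| by
    rintro _ ⟨x, hx, rfl⟩
    exact h x hx

lemma Complex.ofReal_pow_ne_one {x : ℝ} (hx : 1 < x) {n : ℕ} (hn : n ≠ 0) :
    (x : ℂ) ^ n ≠ 1 := by
  rw [← Complex.ofReal_pow, Complex.ofReal_ne_one]
  exact (one_lt_pow₀ hx hn).ne'

lemma cross_mul_eq_of_div_eq {K : Type*} [Field K] {u α β γ δ v : K}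
    (hu : u ≠ 1) (hα : α ≠ 1) (hβ : β ≠ 1) (hγ : γ ≠ 1) (hδ : δ ≠ 1)
    (h : (u + 1) * (u - 1) / ((u - 1) * (α - 1) * (β - 1)) = (v + 1) / ((γ - 1) * (δ - 1))) :
    (u + 1) * (γ - 1) * (δ - 1) = (v + 1) * (α - 1) * (β - 1) := by
  rw [← sub_ne_zero] at hu hα hβ hγ hδ
  field_simp at h
  linear_combination h

lemma exponents_eq_of_mul_eq {R : Type*} [CommRing R] [CharZero R] {a b c d : ℕ}
    (h : ((X : R[X]) ^ (a + b) + 1) * (X ^ c - 1) * (X ^ d - 1)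
      = (X ^ (c + d) + 1) * (X ^ a - 1) * (X ^ b - 1)) :
    ({c, d, a + b + c, a + b + d} : Multiset ℕ) = {a, b, c + d + a, c + d + b} := by
  apply multiset_sum_X_pow_injective (R := R)
  simp only [Multiset.insert_eq_cons, Multiset.map_cons, Multiset.sum_cons,
    Multiset.map_singleton, Multiset.sum_singleton]
  linear_combination -h

lemma eq_and_eq_or_eq_and_eq_of_multiset_eq {a b c d : ℕ} (hc : 0 < c) (hd : 0 < d)
    (h : ({c, d, a + b + c, a + b + d} : Multiset ℕ) = {a, b, c + d + a, c + d + b}) :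
    (c = a ∧ d = b) ∨ (c = b ∧ d = a) := by
  have hc' : c ∈ ({a, b, c + d + a, c + d + b} : Multiset ℕ) := h ▸ by simp
  have hd' : d ∈ ({a, b, c + d + a, c + d + b} : Multiset ℕ) := h ▸ by simp
  have ha' : a ∈ ({c, d, a + b + c, a + b + d} : Multiset ℕ) := h ▸ by simp
  have hb' : b ∈ ({c, d, a + b + c, a + b + d} : Multiset ℕ) := h ▸ by simp
  simp only [Multiset.insert_eq_cons, Multiset.mem_cons, Multiset.mem_singleton] at hc' hd' ha' hb'
  omega

/-- Equation (2.7): if (z^{a₂}+1)(z^{a₁+b₁}-1)/((z^{a₂}-1)(z^{a₁}-1)(z^{b₁}-1))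
= (z^{c₁+c₂}+1)/((z^{c₁}-1)(z^{c₂}-1)) identically, with a₂ = a₁ + b₁, then
c₁ + c₂ = a₁ + b₁ and {c₁, c₂} = {a₁, b₁}. -/
theorem stmt_11 (a₁ b₁ c₁ c₂ a₂ : ℕ)
    (ha : 0 < a₁) (hb : 0 < b₁) (hc₁ : 0 < c₁) (hc₂ : 0 < c₂)
    (ha₂ : a₂ = a₁ + b₁)
    (heq : ∀ z : ℂ, z ≠ 0 → z ^ a₂ ≠ 1 → z ^ a₁ ≠ 1 → z ^ b₁ ≠ 1 →
      z ^ c₁ ≠ 1 → z ^ c₂ ≠ 1 →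
      (z ^ a₂ + 1) * (z ^ (a₁ + b₁) - 1) / ((z ^ a₂ - 1) * (z ^ a₁ - 1) * (z ^ b₁ - 1))
        = (z ^ (c₁ + c₂) + 1) / ((z ^ c₁ - 1) * (z ^ c₂ - 1))) :
    c₁ + c₂ = a₁ + b₁ ∧ ((c₁ = a₁ ∧ c₂ = b₁) ∨ (c₁ = b₁ ∧ c₂ = a₁)) := by
  subst ha₂
  have hpoly : ((X : ℂ[X]) ^ (a₁ + b₁) + 1) * (X ^ c₁ - 1) * (X ^ c₂ - 1)
      = (X ^ (c₁ + c₂) + 1) * (X ^ a₁ - 1) * (X ^ b₁ - 1) := by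
    refine eq_of_eval_ofReal_eq (Set.Ioi_infinite 1) fun x (hx : 1 < x) => ?_
    have hpow {n : ℕ} (hn : 0 < n) : (x : ℂ) ^ n ≠ 1 := Complex.ofReal_pow_ne_one hx hn.ne'
    have hx0 : (x : ℂ) ≠ 0 := Complex.ofReal_ne_zero.mpr (by linarith)
    simpa using cross_mul_eq_of_div_eq (hpow (by omega)) (hpow ha) (hpow hb) (hpow hc₁) (hpow hc₂)
      (heq x hx0 (hpow (by omega)) (hpow ha) (hpow hb) (hpow hc₁) (hpow hc₂))
  have hcases := eq_and_eq_or_eq_and_eq_of_multiset_eq hc₁ hc₂ (exponents_eq_of_mul_eq hpoly)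
  exact ⟨by omega, hcases⟩
end

section
/- Let W be a 2 × n matrix of nonzero integers with signs ε_1, ε_2 ∈ {1,-1} such that T(z) = ε_1 Π_j (x z^{w_{1j}} + y)/(z^{w_{1j}} − 1) + ε_2 Π_j (x z^{w_{2j}} + y)/(z^{w_{2j}} − 1) is independent of z for all complex x, y. Assume |w_{11}| ≥ … ≥ |w_{1n}| and |w_{21}| ≥ … ≥ |w_{2n}|. Then |w_{1i}| = |w_{2i}| for all i = 1, …, n. -/
/-!
Specialise to `x = 1`, `y = 2`. Near a primitive `d`-th root of unity `ζ`, the factor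
`(z ^ w + 2) / (z ^ w - 1)` has a simple pole when `d ∣ w` (a simple zero of `z ^ w - 1`) and a
finite nonzero value otherwise (`|ζ ^ w| = 1 ≠ 2`), so the `i`-th product has a pole of order
`#{j | d ∣ w i j}` at `ζ`. A constant is not a combination of two functions with distinct pole
orders, so these counts agree for every `d`. Counting multiples of `v` from the largest `v`
downwards recovers the multiset of `|w i j|` from them, and sorted rows with equal multisets
are equal.
-/

open Finset Filter Topology

def HasPoleOrder {𝕜 : Type*} [NormedField 𝕜] (f : 𝕜 → 𝕜) (ζ : 𝕜) (k : ℕ) : Prop :=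
  ∃ A ≠ 0, Tendsto (fun z => (z - ζ) ^ k * f z) (𝓝[≠] ζ) (𝓝 A)

section

variable {𝕜 : Type*} [NontriviallyNormedField 𝕜] {f g : 𝕜 → 𝕜} {ζ : 𝕜} {k m : ℕ}

theorem tendsto_sub_pow_nhdsNE_zero (hk : k ≠ 0) :
    Tendsto (fun z : 𝕜 => (z - ζ) ^ k) (𝓝[≠] ζ) (𝓝 0) := by
  have : Tendsto (fun z : 𝕜 => (z - ζ) ^ k) (𝓝 ζ) (𝓝 ((ζ - ζ) ^ k)) :=
    ((continuous_sub_right ζ).pow k).tendsto ζ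
  simpa [zero_pow hk] using this.mono_left nhdsWithin_le_nhds

theorem ContinuousAt.hasPoleOrder_zero (hf : ContinuousAt f ζ) (hζ : f ζ ≠ 0) :
    HasPoleOrder f ζ 0 :=
  ⟨f ζ, hζ, by simpa using hf.tendsto.mono_left nhdsWithin_le_nhds⟩

theorem HasDerivAt.hasPoleOrder_inv {f' : 𝕜} (hf : HasDerivAt f f' ζ) (hζ : f ζ = 0)
    (hf' : f' ≠ 0) : HasPoleOrder (fun z => (f z)⁻¹) ζ 1 := by
  refine ⟨f'⁻¹, inv_ne_zero hf', (hasDerivAt_iff_tendsto_slope.mp hf).inv₀ hf' |>.congr' ?_⟩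
  filter_upwards [self_mem_nhdsWithin] with z hz
  rw [slope_def_field, hζ, sub_zero, inv_div, pow_one, div_eq_mul_inv]

namespace HasPoleOrder

theorem eventually_ne_zero (hf : HasPoleOrder f ζ k) : ∀ᶠ z in 𝓝[≠] ζ, f z ≠ 0 := by
  obtain ⟨A, hA, hlim⟩ := hf
  filter_upwards [hlim.eventually_ne hA] with z hz hfz
  simp [hfz] at hz

theorem eq_zero_of_eventuallyEq_const (hf : HasPoleOrder f ζ k) {c : 𝕜}
    (hc : f =ᶠ[𝓝[≠] ζ] fun _ => c) : k = 0 := by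
  obtain ⟨A, hA, hlim⟩ := hf
  by_contra hk
  have hzero : Tendsto (fun z => (z - ζ) ^ k * f z) (𝓝[≠] ζ) (𝓝 0) := by
    simpa using ((tendsto_sub_pow_nhdsNE_zero hk).mul_const c).congr'
      (hc.mono fun z hz => by rw [hz])
  exact hA (tendsto_nhds_unique hlim hzero)

theorem mul (hf : HasPoleOrder f ζ k) (hg : HasPoleOrder g ζ m) :
    HasPoleOrder (fun z => f z * g z) ζ (k + m) := by
  obtain ⟨A, hA, hf⟩ := hf
  obtain ⟨B, hB, hg⟩ := hg
  exact ⟨A * B, mul_ne_zero hA hB, (hf.mul hg).congr fun z => by ring⟩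

theorem const_mul (hf : HasPoleOrder f ζ k) {c : 𝕜} (hc : c ≠ 0) :
    HasPoleOrder (fun z => c * f z) ζ k := by
  obtain ⟨A, hA, hf⟩ := hf
  exact ⟨c * A, mul_ne_zero hc hA, (hf.const_mul c).congr fun z => by ring⟩

theorem prod {ι : Type*} (s : Finset ι) {f : ι → 𝕜 → 𝕜} {k : ι → ℕ}
    (h : ∀ i ∈ s, HasPoleOrder (f i) ζ (k i)) :
    HasPoleOrder (fun z => ∏ i ∈ s, f i z) ζ (∑ i ∈ s, k i) := by
  choose! A hA hlim using h
  refine ⟨∏ i ∈ s, A i, prod_ne_zero_iff.mpr hA, (tendsto_finsetProd s hlim).congr fun z => ?_⟩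
  rw [prod_mul_distrib, prod_pow_eq_pow_sum]

theorem add_of_lt (hf : HasPoleOrder f ζ k) (hg : HasPoleOrder g ζ m) (hmk : m < k) :
    HasPoleOrder (fun z => f z + g z) ζ k := by
  obtain ⟨A, hA, hf⟩ := hf
  obtain ⟨B, -, hg⟩ := hg
  have hsum := hf.add ((tendsto_sub_pow_nhdsNE_zero (Nat.sub_ne_zero_of_lt hmk)).mul hg)
  rw [zero_mul, add_zero] at hsum
  refine ⟨A, hA, hsum.congr fun z => ?_⟩
  rw [← mul_assoc, ← pow_add, Nat.sub_add_cancel hmk.le, mul_add]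

theorem add_of_ne (hf : HasPoleOrder f ζ k) (hg : HasPoleOrder g ζ m) (hkm : k ≠ m) :
    HasPoleOrder (fun z => f z + g z) ζ (max k m) := by
  rcases hkm.lt_or_gt with hkm | hkm
  · simpa [max_eq_right hkm.le, add_comm] using hg.add_of_lt hf hkm
  · simpa [max_eq_left hkm.le] using hf.add_of_lt hg hkm

end HasPoleOrder

end

theorem hasPoleOrder_zpow_add_two {ζ : ℂ} {d : ℕ} (hζ : IsPrimitiveRoot ζ d) (hd : d ≠ 0)
    (w : ℤ) : HasPoleOrder (fun z : ℂ => z ^ w + 2) ζ 0 := by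
  have hζ0 : ζ ≠ 0 := hζ.ne_zero hd
  refine ((continuousAt_zpow₀ ζ w (Or.inl hζ0)).add continuousAt_const).hasPoleOrder_zero
    fun h => ?_
  have hnorm : ‖ζ ^ w‖ = 1 := by
    rw [norm_zpow, Complex.norm_eq_one_of_pow_eq_one hζ.pow_eq_one hd, one_zpow]
  have h2 : ζ ^ w = -2 := eq_neg_of_add_eq_zero_left h
  norm_num [h2] at hnorm

theorem hasPoleOrder_inv_zpow_sub_one {ζ : ℂ} {d : ℕ} (hζ : IsPrimitiveRoot ζ d) (hd : d ≠ 0)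
    {w : ℤ} (hw : w ≠ 0) :
    HasPoleOrder (fun z : ℂ => (z ^ w - 1)⁻¹) ζ (if (d : ℤ) ∣ w then 1 else 0) := by
  have hζ0 : ζ ≠ 0 := hζ.ne_zero hd
  split_ifs with hdw
  · refine ((hasDerivAt_zpow w ζ (Or.inl hζ0)).sub_const 1).hasPoleOrder_inv ?_
      (mul_ne_zero (Int.cast_ne_zero.mpr hw) (zpow_ne_zero _ hζ0))
    rw [(hζ.zpow_eq_one_iff_dvd w).mpr hdw, sub_self]
  · have hne : ζ ^ w - 1 ≠ 0 := sub_ne_zero.mpr (mt (hζ.zpow_eq_one_iff_dvd w).mp hdw)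
    have hcont := ((continuousAt_zpow₀ ζ w (Or.inl hζ0)).sub continuousAt_const).inv₀ hne
    exact hcont.hasPoleOrder_zero (inv_ne_zero hne)

theorem hasPoleOrder_prod_zpow_add_two_div {ζ : ℂ} {d : ℕ} (hζ : IsPrimitiveRoot ζ d)
    (hd : d ≠ 0) {ι : Type*} [Fintype ι] {w : ι → ℤ} (hw : ∀ j, w j ≠ 0) :
    HasPoleOrder (fun z : ℂ => ∏ j, (z ^ w j + 2) / (z ^ w j - 1)) ζ #{j | (d : ℤ) ∣ w j} := by
  rw [card_filter]
  refine HasPoleOrder.prod _ fun j _ => ?_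
  simpa [div_eq_mul_inv] using
    (hasPoleOrder_zpow_add_two hζ hd (w j)).mul (hasPoleOrder_inv_zpow_sub_one hζ hd (hw j))

theorem card_dvd_eq_of_forall_eq_const {ι : Type*} [Fintype ι] {W : Fin 2 → ι → ℤ}
    {ε : Fin 2 → ℂ} (hW : ∀ i j, W i j ≠ 0) (hε : ∀ i, ε i ≠ 0) {c : ℂ}
    (h : ∀ z : ℂ, z ≠ 0 → (∀ i j, z ^ W i j ≠ 1) →
      ∑ i, ε i * ∏ j, (z ^ W i j + 2) / (z ^ W i j - 1) = c)
    {d : ℕ} (hd : d ≠ 0) : #{j | (d : ℤ) ∣ W 0 j} = #{j | (d : ℤ) ∣ W 1 j} := by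
  obtain ⟨ζ, hζ⟩ : ∃ ζ : ℂ, IsPrimitiveRoot ζ d := ⟨_, Complex.isPrimitiveRoot_exp d hd⟩
  have hP i := hasPoleOrder_prod_zpow_add_two_div hζ hd (hW i)
  by_contra hne
  have hT := ((hP 0).const_mul (hε 0)).add_of_ne ((hP 1).const_mul (hε 1)) hne
  -- at the excluded points `z ^ W i j = 1` the junk value `x / 0 = 0` makes the product vanish
  have hconst : (fun z => ε 0 * ∏ j, (z ^ W 0 j + 2) / (z ^ W 0 j - 1) +
      ε 1 * ∏ j, (z ^ W 1 j + 2) / (z ^ W 1 j - 1)) =ᶠ[𝓝[≠] ζ] fun _ => c := by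
    filter_upwards [(eventually_ne_nhds (hζ.ne_zero hd)).filter_mono nhdsWithin_le_nhds,
      (hP 0).eventually_ne_zero, (hP 1).eventually_ne_zero] with z hz h0 h1
    rw [← h z hz, Fin.sum_univ_two]
    have hP0 : ∀ i, ∏ j, (z ^ W i j + 2) / (z ^ W i j - 1) ≠ 0 :=
      Fin.forall_fin_two.mpr ⟨h0, h1⟩
    intro i j hzw
    refine prod_ne_zero_iff.mp (hP0 i) j (mem_univ j) ?_
    rw [hzw, sub_self, div_zero]
  have := hT.eq_zero_of_eventuallyEq_const hconst
  omega

namespace Multiset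

theorem countP_eq_countP_of_count_eq {α : Type*} [DecidableEq α] {p : α → Prop}
    [DecidablePred p] {s t : Multiset α} (h : ∀ a, p a → count a s = count a t) :
    s.countP p = t.countP p := by
  rw [countP_eq_card_filter, countP_eq_card_filter]
  congr 1
  ext a
  rw [count_filter, count_filter]
  split_ifs with ha
  exacts [h a ha, rfl]

theorem countP_dvd_eq_count_add {v : ℕ} {s : Multiset ℕ} (hs : 0 ∉ s) :
    s.countP (v ∣ ·) = s.count v + s.countP (fun a => v ∣ a ∧ v < a) := by
  induction s using Multiset.induction_on with
  | empty => simp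
  | cons a s ih =>
    rw [mem_cons, not_or] at hs
    have hle : v ∣ a → v ≤ a := Nat.le_of_dvd (Nat.pos_of_ne_zero (Ne.symm hs.1))
    simp only [countP_cons, count_cons, ih hs.2]
    split_ifs <;> simp_all <;> omega

theorem eq_of_countP_dvd_eq {s t : Multiset ℕ} (hs : 0 ∉ s) (ht : 0 ∉ t)
    (h : ∀ d, 0 < d → s.countP (d ∣ ·) = t.countP (d ∣ ·)) : s = t := by
  ext v
  induction v using Nat.strong_decreasing_induction with
  | base =>
    refine ⟨(s + t).sum, fun m hm => ?_⟩
    have hmem : m ∉ s + t := fun h => (le_sum_of_mem h).not_gt hm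
    rw [mem_add, not_or] at hmem
    rw [count_eq_zero_of_notMem hmem.1, count_eq_zero_of_notMem hmem.2]
  | step v ih =>
    rcases v.eq_zero_or_pos with rfl | hv
    · rw [count_eq_zero_of_notMem hs, count_eq_zero_of_notMem ht]
    have := h v hv
    rw [countP_dvd_eq_count_add hs, countP_dvd_eq_count_add ht,
      countP_eq_countP_of_count_eq fun a ha => ih a ha.2] at this
    omega

end Multiset

theorem Fin.eq_of_antitone_of_univ_val_map_eq {α : Type*} [PartialOrder α] {n : ℕ}
    {f g : Fin n → α} (hf : Antitone f) (hg : Antitone g)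
    (h : univ.val.map f = univ.val.map g) : f = g :=
  List.ofFn_injective <|
    (Multiset.coe_eq_coe.mp (by simpa using h)).eq_of_sortedGE hf.sortedGE_ofFn hg.sortedGE_ofFn

/-- For a T_{x,y}-rigid 2 × n set of powers with rows sorted by decreasing
absolute value, corresponding entries have equal absolute values. -/
theorem stmt_12 (n : ℕ) (W : Fin 2 → Fin n → ℤ) (ε : Fin 2 → ℤ)
    (hW : ∀ i j, W i j ≠ 0) (hε : ∀ i, ε i = 1 ∨ ε i = -1)
    (hsort : ∀ i : Fin 2, ∀ j j' : Fin n, j ≤ j' → |W i j'| ≤ |W i j|)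
    (hrigid : ∀ x y : ℂ, ∃ c : ℂ, ∀ z : ℂ, z ≠ 0 → (∀ i j, z ^ (W i j) ≠ 1) →
      ∑ i, (ε i : ℂ) * ∏ j, (x * z ^ (W i j) + y) / (z ^ (W i j) - 1) = c) :
    ∀ j, |W 0 j| = |W 1 j| := by
  obtain ⟨c, hc⟩ := hrigid 1 2
  have hε0 (i : Fin 2) : (ε i : ℂ) ≠ 0 := by rcases hε i with h | h <;> simp [h]
  have hcard (d : ℕ) (hd : 0 < d) : #{j | (d : ℤ) ∣ W 0 j} = #{j | (d : ℤ) ∣ W 1 j} :=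
    card_dvd_eq_of_forall_eq_const hW hε0 (by simpa using hc) hd.ne'
  have hanti (i : Fin 2) : Antitone fun j => (W i j).natAbs := fun j j' hjj' => by
    have := hsort i j j' hjj'
    rwa [Int.abs_eq_natAbs, Int.abs_eq_natAbs, Nat.cast_le] at this
  have hmap : univ.val.map (fun j => (W 0 j).natAbs) = univ.val.map (fun j => (W 1 j).natAbs) :=
    Multiset.eq_of_countP_dvd_eq (by simpa using hW 0) (by simpa using hW 1) fun d hd => by
      simp only [Multiset.countP_map, ← filter_val, ← card_def, ← Int.natCast_dvd]
      exact hcard d hd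
  intro j
  rw [Int.abs_eq_natAbs, Int.abs_eq_natAbs,
    congrFun (Fin.eq_of_antitone_of_univ_val_map_eq (hanti 0) (hanti 1) hmap) j]
end

section
/- Under the hypotheses of equation (2.1) of the paper (positive integers a_1 ≥ a_i for all i, a_1 > b_j for all j, k + ℓ = n, k, ℓ ≥ 1, satisfying the rigidity identity for all x, y), one has k·a_1 = b_1 + ⋯ + b_ℓ, and consequently a_1 = a_2 = ⋯ = a_k, k is odd, and ℓ is even. -/
/-!
Write `A = a₁`. Putting `y = 0` leaves `2 ^ Σ aᵢ = 2 ^ Σ bⱼ`. Putting `x = -z ^ A`, `y = 1` kills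
the second product, since its factor `z ^ A - z ^ a₁` vanishes; pulling `X ^ Σ bⱼ` out of
`∏ (X ^ bⱼ - X ^ A)` leaves a polynomial identity
`X ^ Σ bⱼ * P = ((-X ^ A) ^ k - (-X ^ A) ^ l) * W` with `P(0) = 1` and `W(0) = ±1`.
The orders of vanishing at `0` must agree, and as `Σ bⱼ < l A` this forces `k < l` and
`Σ bⱼ = k A`. The constant terms then give `(-1) ^ l = 1`, and the leading coefficients give
`(-1) ^ k = -1`. Finally `Σ aᵢ = k A` with every `aᵢ ≤ A` forces `aᵢ = A`.
-/

open Polynomial Finset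

namespace Polynomial

variable {R : Type*} [CommRing R] {ι : Type*} [Fintype ι] {f : ι → ℕ}

theorem leadingCoeff_C_sub_C_mul_X_pow (u : R) {v : R} (hv : v ≠ 0) {n : ℕ} (hn : 0 < n) :
    (C u - C v * X ^ n).leadingCoeff = -v := by
  rw [leadingCoeff_sub_of_degree_lt' ?_, leadingCoeff_C_mul_X_pow]
  rw [degree_C_mul_X_pow n hv]
  exact degree_C_le.trans_lt (by exact_mod_cast hn)

theorem neg_X_pow_pow_sub_neg_X_pow_pow (c : ℕ) {m n : ℕ} (hmn : m ≤ n) :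
    ((-X ^ c : R[X]) ^ m - (-X ^ c) ^ n) =
      X ^ (m * c) * (C ((-1) ^ m) - C ((-1) ^ n) * X ^ ((n - m) * c)) := by
  obtain ⟨d, rfl⟩ := Nat.exists_eq_add_of_le hmn
  simp only [neg_pow (X ^ c : R[X]), map_mul, map_pow, map_neg, map_one,
    Nat.add_sub_cancel_left, pow_add]
  ring

theorem eval_zero_prod_one_sub_X_pow (hf : ∀ i, 0 < f i) :
    (∏ i, (1 - X ^ f i : R[X])).eval 0 = 1 := by
  simp [eval_prod, zero_pow (hf _).ne']

theorem eval_zero_prod_X_pow_sub_one (hf : ∀ i, 0 < f i) :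
    (∏ i, (X ^ f i - 1 : R[X])).eval 0 = (-1) ^ Fintype.card ι := by
  simp [eval_prod, zero_pow (hf _).ne']

variable [IsDomain R]

theorem leadingCoeff_prod_one_sub_X_pow (hf : ∀ i, 0 < f i) :
    (∏ i, (1 - X ^ f i : R[X])).leadingCoeff = (-1) ^ Fintype.card ι := by
  have h (i : ι) : (1 - X ^ f i : R[X]) = C 1 - C 1 * X ^ f i := by simp
  simp [leadingCoeff_prod, h, leadingCoeff_C_sub_C_mul_X_pow _ one_ne_zero (hf _)]

theorem leadingCoeff_prod_X_pow_sub_one (hf : ∀ i, 0 < f i) :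
    (∏ i, (X ^ f i - 1 : R[X])).leadingCoeff = 1 := by
  have h (i : ι) : (X ^ f i - 1 : R[X]) = X ^ f i - C 1 := by simp
  simp [leadingCoeff_prod, h, leadingCoeff_X_pow_sub_C (hf _)]

theorem eq_of_X_pow_mul_eq_X_pow_mul {p q : R[X]} {m n : ℕ} (hp : p.eval 0 ≠ 0)
    (hq : q.eval 0 ≠ 0) (h : X ^ m * p = X ^ n * q) : m = n ∧ p = q := by
  have hp0 : p ≠ 0 := by rintro rfl; simp at hp
  have hq0 : q ≠ 0 := by rintro rfl; simp at hq
  have hp' : p.natTrailingDegree = 0 :=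
    natTrailingDegree_eq_zero.2 (.inr (by rwa [coeff_zero_eq_eval_zero]))
  have hq' : q.natTrailingDegree = 0 :=
    natTrailingDegree_eq_zero.2 (.inr (by rwa [coeff_zero_eq_eval_zero]))
  have hmn : m = n := by
    have := congrArg natTrailingDegree h
    rwa [mul_comm, mul_comm _ q, natTrailingDegree_mul_X_pow hp0, natTrailingDegree_mul_X_pow hq0,
      hp', hq', zero_add, zero_add] at this
  subst hmn
  exact ⟨rfl, mul_left_cancel₀ (pow_ne_zero m X_ne_zero) h⟩

theorem exponent_eq_and_parity_of_X_pow_mul_eq [CharZero R] {k l A N : ℕ} {P W : R[X]}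
    (hA : 0 < A) (hN : N < l * A) (hP0 : P.eval 0 = 1)
    (hPlead : P.leadingCoeff = (-1) ^ k * (-1) ^ l) (hW0 : W.eval 0 = (-1) ^ k * (-1) ^ l)
    (hWlead : W.leadingCoeff = 1) (h : X ^ N * P = ((-X ^ A) ^ k - (-X ^ A) ^ l) * W) :
    N = k * A ∧ Odd k ∧ Even l := by
  have hneg : (-1 : R) ≠ 1 := by norm_num
  have hP : P.eval 0 ≠ 0 := by simp [hP0]
  rcases lt_trichotomy k l with hkl | rfl | hlk
  · rw [neg_X_pow_pow_sub_neg_X_pow_pow A hkl.le, mul_assoc] at h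
    set E : R[X] := C ((-1) ^ k) - C ((-1) ^ l) * X ^ ((l - k) * A)
    have hE0 : E.eval 0 = (-1) ^ k := by
      simp [E, zero_pow (Nat.mul_ne_zero (Nat.sub_ne_zero_of_lt hkl) hA.ne')]
    obtain ⟨rfl, hPEW⟩ := eq_of_X_pow_mul_eq_X_pow_mul hP (by simp [hE0, hW0]) h
    have hlead := congrArg leadingCoeff hPEW
    rw [leadingCoeff_mul, hPlead, hWlead, mul_one, leadingCoeff_C_sub_C_mul_X_pow _ (by simp)
      (Nat.mul_pos (Nat.sub_pos_of_lt hkl) hA)] at hlead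
    have heval := congrArg (eval 0) hPEW
    rw [eval_mul, hP0, hE0, hW0, ← mul_assoc, ← pow_add, Even.neg_one_pow ⟨k, rfl⟩,
      one_mul] at heval
    refine ⟨rfl, (neg_one_pow_eq_neg_one_iff_odd hneg).1 ?_,
      (neg_one_pow_eq_one_iff_even hneg).1 heval.symm⟩
    exact mul_right_cancel₀ (pow_ne_zero l (neg_ne_zero.2 one_ne_zero)) (by rw [hlead]; ring)
  · rw [sub_self, zero_mul, mul_eq_zero] at h
    exact absurd (h.resolve_left (pow_ne_zero _ X_ne_zero)) (by rintro rfl; simp at hP)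
  · rw [← neg_sub, neg_X_pow_pow_sub_neg_X_pow_pow A hlk.le, neg_mul, ← mul_neg, mul_assoc] at h
    set E : R[X] := C ((-1) ^ l) - C ((-1) ^ k) * X ^ ((k - l) * A)
    have hE0 : E.eval 0 = (-1) ^ l := by
      simp [E, zero_pow (Nat.mul_ne_zero (Nat.sub_ne_zero_of_lt hlk) hA.ne')]
    have := (eq_of_X_pow_mul_eq_X_pow_mul hP (by simp [hE0, hW0]) h).1
    omega

end Polynomial

theorem Complex.natCast_pow_ne_one {n m : ℕ} (hn : 2 ≤ n) (hm : 0 < m) : (n : ℂ) ^ m ≠ 1 := by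
  exact_mod_cast (Nat.one_lt_pow hm.ne' hn).ne'

def RigidityIdentity {k l : ℕ} (a : Fin k → ℕ) (b : Fin l → ℕ) : Prop :=
  ∀ x y z : ℂ, z ≠ 0 → (∀ i, z ^ (a i) ≠ 1) → (∀ j, z ^ (b j) ≠ 1) →
    (∏ i, (x * z ^ (a i) + y)) * (∏ j, (x + y * z ^ (b j)))
      - (∏ i, (x + y * z ^ (a i))) * (∏ j, (x * z ^ (b j) + y))
    = (x ^ k * y ^ l - x ^ l * y ^ k) * (∏ i, (z ^ (a i) - 1)) * (∏ j, (z ^ (b j) - 1))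

namespace RigidityIdentity

open Complex

variable {k l : ℕ} {a : Fin k → ℕ} {b : Fin l → ℕ}

theorem sum_eq_sum (h : RigidityIdentity a b) (hk : k ≠ 0) (hl : l ≠ 0) (ha : ∀ i, 0 < a i)
    (hb : ∀ j, 0 < b j) : ∑ i, a i = ∑ j, b j := by
  have h2 := h 1 0 2 two_ne_zero (fun i => natCast_pow_ne_one le_rfl (ha i))
    (fun j => natCast_pow_ne_one le_rfl (hb j))
  simp only [one_mul, add_zero, prod_pow_eq_pow_sum, zero_mul, prod_const_one, mul_one, one_pow,
    zero_pow hl, mul_zero, zero_pow hk, sub_self] at h2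
  exact Nat.pow_right_injective le_rfl (by exact_mod_cast sub_eq_zero.1 h2)

theorem polynomial_identity (h : RigidityIdentity a b) (ha : ∀ i, 0 < a i) (hb : ∀ j, 0 < b j)
    (c : ℕ) :
    (∏ i, (1 - X ^ (c + a i) : ℂ[X])) * ∏ j, (X ^ b j - X ^ c)
        - (∏ i, (X ^ a i - X ^ c)) * ∏ j, (1 - X ^ (c + b j))
      = ((-X ^ c) ^ k - (-X ^ c) ^ l) * (∏ i, (X ^ a i - 1)) * ∏ j, (X ^ b j - 1) := by
  have hinj : Function.Injective fun n : ℕ => ((n + 2 : ℕ) : ℂ) := fun m n hmn => by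
    simpa using hmn
  refine eq_of_infinite_eval_eq _ _ ((Set.infinite_range_of_injective hinj).mono ?_)
  rintro _ ⟨n, rfl⟩
  -- substitute `x = -z ^ c`, `y = 1` at the points `z = 2, 3, 4, …`
  have hz := h (-((n + 2 : ℕ) : ℂ) ^ c) 1 ((n + 2 : ℕ) : ℂ) (Nat.cast_ne_zero.2 (by omega))
    (fun i => natCast_pow_ne_one (by omega) (ha i)) (fun j => natCast_pow_ne_one (by omega) (hb j))
  simp only [one_mul, one_pow, mul_one] at hz
  simp only [Set.mem_ofPred_eq, eval_sub, eval_mul, eval_prod, eval_pow, eval_neg, eval_X, eval_one]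
  convert hz using 3 <;> exact prod_congr rfl fun _ _ => by ring

theorem X_pow_sum_mul_eq (h : RigidityIdentity a b) (ha : ∀ i, 0 < a i) (hb : ∀ j, 0 < b j)
    (i₀ : Fin k) (hab : ∀ j, b j < a i₀) :
    X ^ (∑ j, b j) * ((∏ i, (1 - X ^ (a i₀ + a i) : ℂ[X])) * ∏ j, (1 - X ^ (a i₀ - b j)))
      = ((-X ^ a i₀) ^ k - (-X ^ a i₀) ^ l) * ((∏ i, (X ^ a i - 1)) * ∏ j, (X ^ b j - 1)) := by
  have hvanish : ∏ i, (X ^ a i - X ^ a i₀ : ℂ[X]) = 0 := prod_eq_zero (mem_univ i₀) (sub_self _)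
  have hfactor :
      ∏ j, (X ^ b j - X ^ a i₀ : ℂ[X]) = X ^ (∑ j, b j) * ∏ j, (1 - X ^ (a i₀ - b j)) := by
    rw [← prod_pow_eq_pow_sum, ← prod_mul_distrib]
    exact prod_congr rfl fun j _ => by
      rw [mul_sub, mul_one, ← pow_add, Nat.add_sub_cancel' (hab j).le]
  have hc := h.polynomial_identity ha hb (a i₀)
  rw [hvanish, hfactor, zero_mul, sub_zero] at hc
  linear_combination hc

theorem sum_eq_mul_and_parity (h : RigidityIdentity a b) (ha : ∀ i, 0 < a i) (hb : ∀ j, 0 < b j)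
    (hl : 0 < l) (i₀ : Fin k) (hab : ∀ j, b j < a i₀) :
    ∑ j, b j = k * a i₀ ∧ Odd k ∧ Even l := by
  have hpos (i : Fin k) : 0 < a i₀ + a i := Nat.add_pos_left (ha i₀) _
  have hpos' (j : Fin l) : 0 < a i₀ - b j := Nat.sub_pos_of_lt (hab j)
  have hsum : ∑ j, b j < l * a i₀ := calc
    ∑ j, b j < ∑ _j : Fin l, a i₀ :=
      sum_lt_sum_of_nonempty (univ_nonempty_iff.2 ⟨⟨0, hl⟩⟩) fun j _ => hab j
    _ = l * a i₀ := by simp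
  refine exponent_eq_and_parity_of_X_pow_mul_eq (ha i₀) hsum ?_ ?_ ?_ ?_
    (h.X_pow_sum_mul_eq ha hb i₀ hab)
  · rw [eval_mul, eval_zero_prod_one_sub_X_pow hpos, eval_zero_prod_one_sub_X_pow hpos', mul_one]
  · rw [leadingCoeff_mul, leadingCoeff_prod_one_sub_X_pow hpos,
      leadingCoeff_prod_one_sub_X_pow hpos', Fintype.card_fin, Fintype.card_fin]
  · rw [eval_mul, eval_zero_prod_X_pow_sub_one ha, eval_zero_prod_X_pow_sub_one hb,
      Fintype.card_fin, Fintype.card_fin]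
  · rw [leadingCoeff_mul, leadingCoeff_prod_X_pow_sub_one ha, leadingCoeff_prod_X_pow_sub_one hb,
      mul_one]

end RigidityIdentity

/-- From equation (2.3): with a := a₁ maximal among the aᵢ and strictly larger than
all bⱼ, the rigidity identity forces k·a = Σ bⱼ, all aᵢ equal to a, k odd, l even. -/
theorem stmt_15 (k l : ℕ) (hk : 0 < k) (hl : 0 < l)
    (a : Fin k → ℕ) (b : Fin l → ℕ) (ha : ∀ i, 0 < a i) (hb : ∀ j, 0 < b j)
    (hamax : ∀ i, a i ≤ a ⟨0, hk⟩) (hab : ∀ j, b j < a ⟨0, hk⟩)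
    (heq : ∀ x y z : ℂ, z ≠ 0 → (∀ i, z ^ (a i) ≠ 1) → (∀ j, z ^ (b j) ≠ 1) →
      (∏ i, (x * z ^ (a i) + y)) * (∏ j, (x + y * z ^ (b j)))
        - (∏ i, (x + y * z ^ (a i))) * (∏ j, (x * z ^ (b j) + y))
      = (x ^ k * y ^ l - x ^ l * y ^ k) * (∏ i, (z ^ (a i) - 1)) * (∏ j, (z ^ (b j) - 1))) :
    k * a ⟨0, hk⟩ = ∑ j, b j ∧ (∀ i, a i = a ⟨0, hk⟩) ∧ Odd k ∧ Even l := by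
  have h : RigidityIdentity a b := heq
  obtain ⟨hsum, hodd, heven⟩ := h.sum_eq_mul_and_parity ha hb hl ⟨0, hk⟩ hab
  have hsums : ∑ i, a i = ∑ _i : Fin k, a ⟨0, hk⟩ := by
    rw [h.sum_eq_sum hk.ne' hl.ne' ha hb, hsum]
    simp
  exact ⟨hsum.symm, fun i => (sum_eq_sum_iff_of_le fun i _ => hamax i).1 hsums i (mem_univ i),
    hodd, heven⟩
end

section
/- Let a, b_1, b_2 be positive integers with a = b_1 + b_2. Then identically in z: (z^a + 1)(z^{a−b_1} − 1)(z^{a−b_2} − 1) / ((z^{b_1} − 1)(z^{b_2} − 1)) = (z^a + 1), and more to the point, the identity (z^a + 1)^k (z^{a−b_1} − 1)⋯(z^{a−b_ℓ} − 1) / ((z^{b_1} − 1)⋯(z^{b_ℓ} − 1)) = z^{a(ℓ−k)} + 1 with k odd, ℓ even, a > b_j for all j, and ka = b_1 + ⋯ + b_ℓ, forces k = 1, ℓ = 2, and a = b_1 + b_2. -/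
/-!
Clearing denominators turns the hypothesis into the polynomial identity
`(X^a + 1)^k * ∏ (X^(a - b j) - 1) = (X^A + 1) * ∏ (X^(b j) - 1)` with `A = a (l - k)`,
where `k < l` because `k a = ∑ b j < l a`.

Let `ζ` be a primitive `2a`-th root of unity, so `ζ^a = -1`. It is a root of order at least `k`
of the left side. On the right, `ζ^A = -1` since `l - k` is odd, and `ζ^(b j) ≠ 1` since
`0 < b j < a`, so `ζ` is a simple root there. Hence `k = 1`.

Let `m` be the least `b j`. Modulo `X^a` both factors `X^a + 1` and `X^A + 1` are `1`, so the
coefficients of `X^m` in the two products agree. On the right this coefficient is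
`±#{j | b j = m} ≠ 0`; on the left it vanishes unless `a - b j = m` for some `j`. So
`a ≤ m + b j` for some `j`, whereas `a = ∑ b ≥ b j + (l - 1) m`; hence `l = 2`.
-/

open Polynomial Finset

namespace Polynomial

variable {R ι : Type*} [CommRing R] {s : Finset ι} {e : ι → ℕ}

theorem coeff_zero_prod_X_pow_sub_one (he : ∀ i ∈ s, 0 < e i) :
    (∏ i ∈ s, (X ^ e i - 1 : R[X])).coeff 0 = (-1) ^ #s := by
  rw [coeff_zero_eq_eval_zero, eval_prod, prod_congr rfl fun i hi => ?_, prod_const]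
  simp [zero_pow (he i hi).ne']

theorem coeff_prod_X_pow_sub_one_of_le {n : ℕ} (hn : 0 < n) (he : ∀ i ∈ s, n ≤ e i) :
    (∏ i ∈ s, (X ^ e i - 1 : R[X])).coeff n = -(-1) ^ #s * #{i ∈ s | e i = n} := by
  classical
  induction s using Finset.induction_on with
  | empty => simp [coeff_one, hn.ne']
  | @insert i s hi ih =>
    have he' : ∀ j ∈ s, n ≤ e j := fun j hj => he j (mem_insert_of_mem hj)
    rw [prod_insert hi, sub_mul, one_mul, coeff_sub, mul_comm, coeff_mul_X_pow', ih he',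
      filter_insert, card_insert_of_notMem hi]
    rcases (he i (mem_insert_self i s)).eq_or_lt with rfl | hlt
    · rw [if_pos le_rfl, Nat.sub_self,
        coeff_zero_prod_X_pow_sub_one fun j hj => hn.trans_le (he' j hj), if_pos rfl,
        card_insert_of_notMem (by simp [hi])]
      push_cast
      ring
    · rw [if_neg hlt.not_ge, if_neg hlt.ne']
      ring

theorem coeff_X_pow_add_one_pow_mul (p : R[X]) (k : ℕ) {a n : ℕ} (hn : n < a) :
    ((X ^ a + 1) ^ k * p).coeff n = p.coeff n := by
  have hdvd : X ^ a ∣ (X ^ a + 1) ^ k * p - p := by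
    have := (sub_dvd_pow_sub_pow (X ^ a + 1 : R[X]) 1 k).mul_right p
    rwa [add_sub_cancel_right, one_pow, sub_mul, one_mul] at this
  simpa [sub_eq_zero] using X_pow_dvd_iff.1 hdvd n hn

theorem eq_of_eval_eq_of_eval_ne_zero [IsDomain R] [Infinite R] {p q r : R[X]} (hr : r ≠ 0)
    (h : ∀ z, r.eval z ≠ 0 → p.eval z = q.eval z) : p = q := by
  have hmul : r * (p - q) = 0 := Polynomial.funext fun z => by
    by_cases hz : r.eval z = 0 <;> simp [hz, h]
  exact sub_eq_zero.1 ((mul_eq_zero.1 hmul).resolve_left hr)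

theorem lt_two_of_X_pow_add_one_pow_mul_eq {K : Type*} [Field K] [CharZero K] {k a A : ℕ}
    {p q : K[X]} {ζ : K} (hA : A ≠ 0) (hζa : ζ ^ a = -1) (hζA : ζ ^ A = -1)
    (hq : q.eval ζ ≠ 0) (h : (X ^ a + 1) ^ k * p = (X ^ A + 1) * q) : k < 2 := by
  by_contra! hk
  obtain ⟨c, rfl⟩ := Nat.exists_eq_add_of_le' hk
  have hζ : ζ ≠ 0 := by
    rintro rfl
    simp [zero_pow hA] at hζA
  have hderiv := congrArg (fun f => eval ζ (derivative f)) h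
  simp [pow_succ, derivative_mul, derivative_X_pow, hζa, hζA, hA, hζ, hq] at hderiv

theorem exists_le_add_of_X_pow_add_one_pow_mul_prod_eq [IsDomain R] [CharZero R] [Fintype ι]
    {k a A : ℕ} {b : ι → ℕ} {i₀ : ι} (hpos : 0 < b i₀) (hmin : ∀ j, b i₀ ≤ b j)
    (hba : ∀ j, b j < a) (haA : a ≤ A)
    (h : (X ^ a + 1) ^ k * ∏ j, (X ^ (a - b j) - 1 : R[X]) = (X ^ A + 1) * ∏ j, (X ^ b j - 1)) :
    ∃ j, a ≤ b i₀ + b j := by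
  by_contra! hlt
  have hcoeff := congrArg (coeff · (b i₀)) h
  rw [coeff_X_pow_add_one_pow_mul _ _ (hba i₀), ← pow_one (X ^ A + 1 : R[X]),
    coeff_X_pow_add_one_pow_mul _ _ ((hba i₀).trans_le haA),
    coeff_prod_X_pow_sub_one_of_le hpos fun j _ => by have := hlt j; omega,
    coeff_prod_X_pow_sub_one_of_le hpos fun j _ => hmin j,
    filter_eq_empty_iff.2 fun j _ => by have := hlt j; omega] at hcoeff
  have hnone : ∀ j, b j ≠ b i₀ := by simpa using hcoeff
  exact hnone i₀ rfl

end Polynomial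

theorem Complex.exists_pow_eq_neg_one_and_pow_ne_one {a : ℕ} (ha : a ≠ 0) :
    ∃ ζ : ℂ, ζ ^ a = -1 ∧ ∀ n, n ≠ 0 → n < a → ζ ^ n ≠ 1 := by
  have hζ := Complex.isPrimitiveRoot_exp (2 * a) (by omega)
  refine ⟨_, ?_, fun n hn hna => hζ.pow_ne_one_of_pos_of_lt hn (by omega)⟩
  have := hζ.pow_of_dvd ha (dvd_mul_left a 2)
  rw [Nat.mul_div_cancel _ (Nat.pos_of_ne_zero ha)] at this
  exact this.eq_neg_one_of_two_right

theorem Finset.card_le_two_of_sum_le {ι : Type*} {s : Finset ι} {b : ι → ℕ} {i j : ι}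
    (hj : j ∈ s) (hpos : 0 < b i) (hmin : ∀ x ∈ s, b i ≤ b x)
    (hsum : ∑ x ∈ s, b x ≤ b i + b j) : #s ≤ 2 := by
  classical
  have hsplit := add_sum_erase s b hj
  have hrest : (#s - 1) * b i ≤ ∑ x ∈ s.erase j, b x := by
    simpa [card_erase_of_mem hj] using
      card_nsmul_le_sum (s.erase j) b (b i) fun x hx => hmin x (mem_of_mem_erase hx)
  have : #s - 1 ≤ 1 := Nat.le_of_mul_le_mul_right (by omega : (#s - 1) * b i ≤ 1 * b i) hpos
  omega

theorem Finset.lt_card_of_mul_eq_sum {ι : Type*} {s : Finset ι} {b : ι → ℕ} {k a : ℕ}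
    (hs : s.Nonempty) (hba : ∀ j ∈ s, b j < a) (hsum : k * a = ∑ j ∈ s, b j) : k < #s := by
  have := sum_lt_sum_of_nonempty hs hba
  rw [sum_const, smul_eq_mul, ← hsum] at this
  exact lt_of_mul_lt_mul_right this a.zero_le

theorem X_pow_add_one_pow_mul_prod_eq_of_eval {ι : Type*} [Fintype ι] {k a A : ℕ}
    {b : ι → ℕ} (hb : ∀ j, 0 < b j)
    (h : ∀ z : ℂ, z ≠ 0 → (∀ j, z ^ b j ≠ 1) →
      (z ^ a + 1) ^ k * (∏ j, (z ^ (a - b j) - 1)) / (∏ j, (z ^ b j - 1)) = z ^ A + 1) :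
    (X ^ a + 1) ^ k * ∏ j, (X ^ (a - b j) - 1 : ℂ[X]) = (X ^ A + 1) * ∏ j, (X ^ b j - 1) := by
  refine eq_of_eval_eq_of_eval_ne_zero (r := X * ∏ j, (X ^ b j - 1)) ?_ fun z hz => ?_
  · exact mul_ne_zero X_ne_zero (prod_ne_zero_iff.2 fun j _ => by
      simpa using X_pow_sub_C_ne_zero (hb j) (1 : ℂ))
  · simp only [eval_mul, eval_X, eval_prod, eval_sub, eval_pow, eval_add, eval_one] at hz ⊢
    have hV := right_ne_zero_of_mul hz
    have hzb j : z ^ b j ≠ 1 := sub_ne_zero.1 (prod_ne_zero_iff.1 hV j (mem_univ j))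
    rw [← h z (left_ne_zero_of_mul hz) hzb, div_mul_cancel₀ _ hV]

/-- Equation (2.5): the special identity for a = b₁ + b₂, and the general fact
that (z^a+1)^k ∏(z^{a-bⱼ}-1)/∏(z^{bⱼ}-1) = z^{a(l-k)}+1 with k odd, l even,
a > bⱼ, k·a = Σ bⱼ forces k = 1, l = 2 and a = b₁ + b₂. -/
theorem stmt_16 :
    (∀ a b₁ b₂ : ℕ, 0 < b₁ → 0 < b₂ → a = b₁ + b₂ →
      ∀ z : ℂ, z ≠ 0 → z ^ b₁ ≠ 1 → z ^ b₂ ≠ 1 →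
        (z ^ a + 1) * (z ^ (a - b₁) - 1) * (z ^ (a - b₂) - 1)
            / ((z ^ b₁ - 1) * (z ^ b₂ - 1)) = z ^ a + 1) ∧
    (∀ (k l : ℕ), Odd k → Even l → 0 < l →
      ∀ (a : ℕ) (b : Fin l → ℕ), (∀ j, 0 < b j) → (∀ j, b j < a) →
        k * a = ∑ j, b j →
        (∀ z : ℂ, z ≠ 0 → (∀ j, z ^ (b j) ≠ 1) →
          (z ^ a + 1) ^ k * (∏ j, (z ^ (a - b j) - 1)) / (∏ j, (z ^ (b j) - 1))
            = z ^ ((a : ℤ) * ((l : ℤ) - (k : ℤ))) + 1) →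
        k = 1 ∧ l = 2 ∧ a = ∑ j, b j) := by
  refine ⟨fun a b₁ b₂ _ _ ha z _ h₁ h₂ => ?_,
    fun k l hk hl hl0 a b hb hba hsum hid => ?_⟩
  · rw [show a - b₁ = b₂ by omega, show a - b₂ = b₁ by omega, mul_assoc, mul_comm (_ - 1),
      mul_div_cancel_right₀ _ (mul_ne_zero (sub_ne_zero.2 h₁) (sub_ne_zero.2 h₂))]
  have : Nonempty (Fin l) := ⟨⟨0, hl0⟩⟩
  obtain ⟨i₀, hi₀⟩ := Finite.exists_min b
  have hkl : k < l := by simpa using lt_card_of_mul_eq_sum univ_nonempty (fun j _ => hba j) hsum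
  have hP := X_pow_add_one_pow_mul_prod_eq_of_eval (A := a * (l - k)) hb fun z hz hzb => by
    rw [hid z hz hzb, ← zpow_natCast]
    push_cast [Nat.cast_sub hkl.le]
    rfl
  have ha0 : a ≠ 0 := by have := hba i₀; omega
  obtain ⟨ζ, hζa, hζ⟩ := Complex.exists_pow_eq_neg_one_and_pow_ne_one ha0
  have hk1 : k = 1 := by
    have hζb : eval ζ (∏ j, (X ^ b j - 1)) ≠ 0 := by
      simpa [eval_prod, prod_ne_zero_iff, sub_ne_zero] using fun j => hζ _ (hb j).ne' (hba j)
    have := lt_two_of_X_pow_add_one_pow_mul_eq (mul_ne_zero ha0 (by omega)) hζa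
      (by rw [pow_mul, hζa, (Nat.Even.sub_odd hkl.le hl hk).neg_one_pow]) hζb hP
    obtain ⟨t, rfl⟩ := hk
    omega
  have ha : a = ∑ j, b j := by rw [← hsum, hk1, one_mul]
  obtain ⟨j, hj⟩ := exists_le_add_of_X_pow_add_one_pow_mul_prod_eq (hb i₀) hi₀ hba
    (Nat.le_mul_of_pos_right a (by omega)) hP
  have hl2 := card_le_two_of_sum_le (mem_univ j) (hb i₀) (fun x _ => hi₀ x) (ha ▸ hj)
  rw [card_univ, Fintype.card_fin] at hl2
  obtain ⟨t, rfl⟩ := hl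
  exact ⟨hk1, by omega, ha⟩
end

section
/- Let a, b be positive integers. The 2 × 3 matrix with rows (a, b, −(a+b)) and (−a, −b, a+b) and signs ε_1 = ε_2 = 1 is T_{x,y}-rigid: for all complex x, y and all z in the domain, [(xz^a+y)(xz^b+y)(xz^{−(a+b)}+y)] / [(z^a−1)(z^b−1)(z^{−(a+b)}−1)] + [(xz^{−a}+y)(xz^{−b}+y)(xz^{a+b}+y)] / [(z^{−a}−1)(z^{−b}−1)(z^{a+b}−1)] = x²(−y) + x(−y)², which is independent of z. -/
/-!
Put A = z^a, B = z^b, C = z^{-(a+b)}, so ABC = 1. Multiplying numerator and denominator of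
each factor of the second term by its variable turns it into
-(x + yA)(x + yB)(x + yC) / ((A - 1)(B - 1)(C - 1)). With e₁ = A + B + C, e₂ = AB + BC + CA
and ABC = 1, the two numerators differ by (x²y - xy²)(e₂ - e₁), while the common denominator
is e₁ - e₂; so the sum is the constant xy² - x²y.
-/

section
variable {K : Type*} [Field K]

theorem mul_inv_add_div_inv_sub_one (x y : K) {w : K} (hw0 : w ≠ 0) (hw1 : w ≠ 1) :
    (x * w⁻¹ + y) / (w⁻¹ - 1) = -((x + y * w) / (w - 1)) := by
  have : w - 1 ≠ 0 := sub_ne_zero.mpr hw1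
  field_simp
  ring

theorem prod_mul_inv_add_div_prod_inv_sub_one (x y : K) {A B C : K} (hABC : A * B * C = 1)
    (hA : A ≠ 1) (hB : B ≠ 1) (hC : C ≠ 1) :
    (x * A⁻¹ + y) * (x * B⁻¹ + y) * (x * C⁻¹ + y) / ((A⁻¹ - 1) * (B⁻¹ - 1) * (C⁻¹ - 1))
      = -((x + y * A) * (x + y * B) * (x + y * C) / ((A - 1) * (B - 1) * (C - 1))) := by
  have hA0 : A ≠ 0 := left_ne_zero_of_mul (left_ne_zero_of_mul_eq_one hABC)
  have hB0 : B ≠ 0 := right_ne_zero_of_mul (left_ne_zero_of_mul_eq_one hABC)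
  have hC0 : C ≠ 0 := right_ne_zero_of_mul_eq_one hABC
  simp only [mul_div_mul_comm, mul_inv_add_div_inv_sub_one x y hA0 hA,
    mul_inv_add_div_inv_sub_one x y hB0 hB, mul_inv_add_div_inv_sub_one x y hC0 hC]
  ring

theorem prod_mul_add_sub_prod_add_mul_of_mul_eq_one (x y : K) {A B C : K}
    (hABC : A * B * C = 1) :
    (x * A + y) * (x * B + y) * (x * C + y) - (x + y * A) * (x + y * B) * (x + y * C)
      = (x ^ 2 * (-y) + x * (-y) ^ 2) * ((A - 1) * (B - 1) * (C - 1)) := by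
  linear_combination (x ^ 3 - y ^ 3 + x ^ 2 * y - x * y ^ 2) * hABC

theorem prod_div_add_prod_inv_div_of_mul_eq_one (x y : K) {A B C : K}
    (hABC : A * B * C = 1) (hA : A ≠ 1) (hB : B ≠ 1) (hC : C ≠ 1) :
    (x * A + y) * (x * B + y) * (x * C + y) / ((A - 1) * (B - 1) * (C - 1))
      + (x * A⁻¹ + y) * (x * B⁻¹ + y) * (x * C⁻¹ + y) / ((A⁻¹ - 1) * (B⁻¹ - 1) * (C⁻¹ - 1))
      = x ^ 2 * (-y) + x * (-y) ^ 2 := by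
  have hden : (A - 1) * (B - 1) * (C - 1) ≠ 0 := by
    simp only [ne_eq, mul_eq_zero, sub_eq_zero, not_or]
    exact ⟨⟨hA, hB⟩, hC⟩
  rw [prod_mul_inv_add_div_prod_inv_sub_one x y hABC hA hB hC, ← sub_eq_add_neg, ← sub_div,
    prod_mul_add_sub_prod_add_mul_of_mul_eq_one x y hABC, mul_div_cancel_right₀ _ hden]

end

theorem stmt_18_general (a b : ℕ)
    (x y z : ℂ) (hz : z ≠ 0)
    (hza : z ^ (a : ℤ) ≠ 1) (hzb : z ^ (b : ℤ) ≠ 1) (hzab : z ^ ((a : ℤ) + b) ≠ 1) :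
    (x * z ^ (a : ℤ) + y) * (x * z ^ (b : ℤ) + y) * (x * z ^ (-((a : ℤ) + b)) + y)
        / ((z ^ (a : ℤ) - 1) * (z ^ (b : ℤ) - 1) * (z ^ (-((a : ℤ) + b)) - 1))
      + (x * z ^ (-(a : ℤ)) + y) * (x * z ^ (-(b : ℤ)) + y) * (x * z ^ ((a : ℤ) + b) + y)
        / ((z ^ (-(a : ℤ)) - 1) * (z ^ (-(b : ℤ)) - 1) * (z ^ ((a : ℤ) + b) - 1))
      = x ^ 2 * (-y) + x * (-y) ^ 2 := by
  have hprod : z ^ (a : ℤ) * z ^ (b : ℤ) * z ^ (-((a : ℤ) + b)) = 1 := by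
    rw [← zpow_add₀ hz, ← zpow_add₀ hz, add_neg_cancel, zpow_zero]
  have hzab' : z ^ (-((a : ℤ) + b)) ≠ 1 := by
    rwa [zpow_neg, inv_ne_one]
  simpa only [zpow_neg, inv_inv] using
    prod_div_add_prod_inv_div_of_mul_eq_one x y hprod hza hzb hzab'

/-- The 'S₃' case: the 2 × 3 matrix with rows (a, b, -(a+b)) and (-a, -b, a+b)
and signs ε₁ = ε₂ = 1 is T_{x,y}-rigid with constant value x²(-y) + x(-y)². -/
theorem stmt_18 (a b : ℕ) (ha : 0 < a) (hb : 0 < b)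
    (x y z : ℂ) (hz : z ≠ 0)
    (hza : z ^ (a : ℤ) ≠ 1) (hzb : z ^ (b : ℤ) ≠ 1) (hzab : z ^ ((a : ℤ) + b) ≠ 1) :
    (x * z ^ (a : ℤ) + y) * (x * z ^ (b : ℤ) + y) * (x * z ^ (-((a : ℤ) + b)) + y)
        / ((z ^ (a : ℤ) - 1) * (z ^ (b : ℤ) - 1) * (z ^ (-((a : ℤ) + b)) - 1))
      + (x * z ^ (-(a : ℤ)) + y) * (x * z ^ (-(b : ℤ)) + y) * (x * z ^ ((a : ℤ) + b) + y)
        / ((z ^ (-(a : ℤ)) - 1) * (z ^ (-(b : ℤ)) - 1) * (z ^ ((a : ℤ) + b) - 1))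
      = x ^ 2 * (-y) + x * (-y) ^ 2 :=
  stmt_18_general a b x y z hz hza hzb hzab
end
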